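/- arXiv:1006.5612 — 5 statements merged into one kernel-verified Lean document; each statement's English description precedes it below -/
import Mathlib

section
/- Let P be a rational polytope in R^n and let rd_i(P) be the smallest positive rational r such that r·aff(F) contains an integral point for every i-face F of P. Then rd_{i-1}(P)/rd_i(P) is an integer for i = 1,...,n. -/
open Pointwise

/-- A point of `ℚⁿ` is a lattice point if all its coordinates are integers. -/
def IsLatticePt {n : ℕ} (x : Fin n → ℚ) : Prop := ∀ i, ∃ z : ℤ, x i = (z : ℚ)

/-- The number of lattice points in the dilate `r • P`. -/
noncomputable def latticeCount {n : ℕ} (P : Set (Fin n → ℚ)) (r : ℚ) : ℕ :=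
  Set.ncard {x | x ∈ r • P ∧ IsLatticePt x}

/-- A rational polytope: the convex hull of finitely many rational points. -/
def IsRatPolytope {n : ℕ} (P : Set (Fin n → ℚ)) : Prop :=
  ∃ V : Finset (Fin n → ℚ), P = convexHull ℚ (V : Set (Fin n → ℚ))

/-- The dimension of a set, as the dimension of its affine hull. -/
noncomputable def polyDim {n : ℕ} (P : Set (Fin n → ℚ)) : ℕ :=
  Module.finrank ℚ (vectorSpan ℚ P)

/-- `F` is a face of the polytope `P`. -/
def IsFace {n : ℕ} (P F : Set (Fin n → ℚ)) : Prop :=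
  F = P ∨ ∃ (f : (Fin n → ℚ) →ₗ[ℚ] ℚ) (c : ℚ),
    (∀ x ∈ P, f x ≤ c) ∧ F = {x | x ∈ P ∧ f x = c}

/-- `F` is an `i`-dimensional (nonempty) face of `P`. -/
def IsIFace {n : ℕ} (P F : Set (Fin n → ℚ)) (i : ℕ) : Prop :=
  IsFace P F ∧ F.Nonempty ∧ polyDim F = i

/-- The dilated affine hull `r • aff(F)` contains a lattice point. -/
def DilAffHasLattice {n : ℕ} (F : Set (Fin n → ℚ)) (r : ℚ) : Prop :=
  ∃ x ∈ r • (affineSpan ℚ F : Set (Fin n → ℚ)), IsLatticePt x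

/-- `k` is the `i`-index `d_i(P)`: the smallest positive integer such that
`k • aff(F)` contains a lattice point for every `i`-face `F` of `P`. -/
def IsIIndex {n : ℕ} (P : Set (Fin n → ℚ)) (i : ℕ) (k : ℕ) : Prop :=
  0 < k ∧ (∀ F, IsIFace P F i → DilAffHasLattice F (k : ℚ)) ∧
    ∀ k' : ℕ, 0 < k' → (∀ F, IsIFace P F i → DilAffHasLattice F (k' : ℚ)) → k ≤ k'

/-- `q` is the rational `i`-index `rd_i(P)`: the smallest positive rational such that
`q • aff(F)` contains a lattice point for every `i`-face `F` of `P`. -/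
def IsRatIIndex {n : ℕ} (P : Set (Fin n → ℚ)) (i : ℕ) (q : ℚ) : Prop :=
  0 < q ∧ (∀ F, IsIFace P F i → DilAffHasLattice F q) ∧
    ∀ q' : ℚ, 0 < q' → (∀ F, IsIFace P F i → DilAffHasLattice F q') → q ≤ q'

/-- An integral polytope: the convex hull of finitely many lattice points. -/
def IsIntegralPolytope {n : ℕ} (P : Set (Fin n → ℚ)) : Prop :=
  ∃ V : Finset (Fin n → ℚ), (∀ v ∈ V, IsLatticePt v) ∧
    P = convexHull ℚ (V : Set (Fin n → ℚ))

/-- `q` is the rational denominator `q(P)`: the smallest positive rational such that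
`q • P` is an integral polytope. -/
def IsRatDenom {n : ℕ} (P : Set (Fin n → ℚ)) (q : ℚ) : Prop :=
  0 < q ∧ IsIntegralPolytope (q • P) ∧
    ∀ q' : ℚ, 0 < q' → IsIntegralPolytope (q' • P) → q ≤ q'

/-- `f` is periodic with period `d`. -/
def IsPeriodic (f : ℚ → ℚ) (d : ℚ) : Prop := ∀ r, f (r + d) = f r

/-- `Q` is a family of coefficient functions of the rational Ehrhart quasi-polynomial
of `P` (of degree `d`): each `Q i` is periodic with some positive period and
`#(rP ∩ ℤⁿ) = ∑_{i=0}^{d} Q_i(P,r) rⁱ` for all rational `r ≥ 0`. -/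
def IsRatEhrhartCoeffs {n : ℕ} (P : Set (Fin n → ℚ)) (d : ℕ) (Q : ℕ → ℚ → ℚ) : Prop :=
  (∀ i, ∃ p : ℚ, 0 < p ∧ IsPeriodic (Q i) p) ∧
  ∀ r : ℚ, 0 ≤ r → (latticeCount P r : ℚ) = ∑ i ∈ Finset.range (d + 1), Q i r * r ^ i

/-- `G` is the family of coefficient functions of the classical Ehrhart quasi-polynomial
of `P` (of degree `d`): each `G i` is periodic with some positive integer period and
`#(kP ∩ ℤⁿ) = ∑_{i=0}^{d} G_i(P,k) kⁱ` for all integers `k ≥ 0`. -/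
def IsEhrhartCoeffs {n : ℕ} (P : Set (Fin n → ℚ)) (d : ℕ) (G : ℕ → ℕ → ℚ) : Prop :=
  (∀ i, ∃ p : ℕ, 0 < p ∧ ∀ k, G i (k + p) = G i k) ∧
  ∀ k : ℕ, (latticeCount P (k : ℚ) : ℚ) = ∑ i ∈ Finset.range (d + 1), G i k * (k : ℚ) ^ i



section Aux

open Module

variable {n : ℕ}

abbrev VS (S : Set (Fin n → ℚ)) : Submodule ℚ (Fin n → ℚ) := vectorSpan ℚ S

lemma lattice_sub {n : ℕ} {x y : Fin n → ℚ} (hx : IsLatticePt x) (hy : IsLatticePt y) :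
    IsLatticePt (x - y) := by
  intro i
  obtain ⟨a, ha⟩ := hx i; obtain ⟨b, hb⟩ := hy i
  exact ⟨a - b, by simp [ha, hb]⟩

lemma lattice_zsmul {n : ℕ} {x : Fin n → ℚ} (hx : IsLatticePt x) (z : ℤ) :
    IsLatticePt ((z : ℚ) • x) := by
  intro i
  obtain ⟨a, ha⟩ := hx i
  refine ⟨z * a, ?_⟩
  simp only [Pi.smul_apply, smul_eq_mul, ha]
  push_cast; ring

lemma dil_mono {n : ℕ} {F F' : Set (Fin n → ℚ)} (h : F' ⊆ F) {q : ℚ}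
    (hd : DilAffHasLattice F' q) : DilAffHasLattice F q := by
  obtain ⟨x, hx, hl⟩ := hd
  refine ⟨x, ?_, hl⟩
  exact Set.smul_set_mono (fun y hy => (affineSpan_mono ℚ h : affineSpan ℚ F' ≤ _) hy) hx

lemma dil_zero {n : ℕ} {F : Set (Fin n → ℚ)} (hF : F.Nonempty) : DilAffHasLattice F 0 := by
  have hne : (affineSpan ℚ F : Set (Fin n → ℚ)).Nonempty := by
    obtain ⟨p, hp⟩ := hF
    exact ⟨p, subset_affineSpan ℚ F hp⟩
  refine ⟨0, ?_, fun i => ⟨0, by simp⟩⟩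
  rw [Set.zero_smul_set hne]
  simp

lemma dil_sub {n : ℕ} {F : Set (Fin n → ℚ)} (hF : F.Nonempty) {a b : ℚ}
    (ha : DilAffHasLattice F a) (hb : DilAffHasLattice F b) : DilAffHasLattice F (a - b) := by
  rcases eq_or_ne (a - b) 0 with h0 | h0
  · rw [h0]; exact dil_zero hF
  obtain ⟨x, hx, hlx⟩ := ha
  obtain ⟨y, hy, hly⟩ := hb
  obtain ⟨u, hu, rfl⟩ := hx
  obtain ⟨v, hv, rfl⟩ := hy
  set t : ℚ := a / (a - b) with ht
  have hc : t • (u - v) + v ∈ (affineSpan ℚ F : Set (Fin n → ℚ)) := by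
    have := (affineSpan ℚ F).smul_vsub_vadd_mem t hu hv hv
    simpa [vsub_eq_sub] using this
  refine ⟨a • u - b • v, ⟨t • (u - v) + v, hc, ?_⟩, lattice_sub hlx hly⟩
  show (a - b) • (t • (u - v) + v) = a • u - b • v
  have hmul : (a - b) * t = a := by
    rw [ht]; field_simp
  rw [smul_add, smul_smul, hmul]
  module

lemma dil_zmul {n : ℕ} {F : Set (Fin n → ℚ)} (hF : F.Nonempty) {q : ℚ}
    (hq : DilAffHasLattice F q) (z : ℤ) : DilAffHasLattice F ((z : ℚ) * q) := by
  rcases eq_or_ne z 0 with rfl | hz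
  · simpa using dil_zero hF
  obtain ⟨x, ⟨u, hu, rfl⟩, hl⟩ := hq
  exact ⟨(z : ℚ) • (q • u), ⟨u, hu, by show ((z:ℚ) * q) • u = _; rw [mul_smul]⟩, lattice_zsmul hl z⟩





lemma hull_le (V : Finset (Fin n → ℚ)) (φ : (Fin n → ℚ) →ₗ[ℚ] ℚ) (t : ℚ)
    (h : ∀ v ∈ V, φ v ≤ t) : ∀ x ∈ convexHull ℚ (V : Set (Fin n → ℚ)), φ x ≤ t := by
  intro x hx
  have : convexHull ℚ (V : Set (Fin n → ℚ)) ⊆ {w | φ w ≤ t} :=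
    convexHull_min (fun v hv => h v hv) (convex_halfSpace_le φ.isLinear t)
  exact this hx

lemma exp_hull (V : Finset (Fin n → ℚ)) (φ : (Fin n → ℚ) →ₗ[ℚ] ℚ) (t : ℚ)
    (h : ∀ v ∈ V, φ v ≤ t) :
    {x | x ∈ convexHull ℚ (V : Set (Fin n → ℚ)) ∧ φ x = t} =
      convexHull ℚ ((V.filter (fun v => φ v = t) : Finset (Fin n → ℚ)) : Set (Fin n → ℚ)) := by
  ext x
  constructor
  · rintro ⟨hx, hφ⟩
    rw [Finset.convexHull_eq] at hx
    obtain ⟨w, hw0, hw1, hwx⟩ := hx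
    have hxsum : x = ∑ v ∈ V, w v • v := by
      rw [← hwx, Finset.centerMass_eq_of_sum_1 _ _ hw1]; rfl
    have hφx : ∑ v ∈ V, w v * φ v = t := by
      rw [← hφ, hxsum, map_sum]
      simp [map_smul, smul_eq_mul]
    have hzero : ∀ v ∈ V, w v * (t - φ v) = 0 := by
      have hsum : ∑ v ∈ V, w v * (t - φ v) = 0 := by
        simp only [mul_sub]
        rw [Finset.sum_sub_distrib, ← Finset.sum_mul, hw1, one_mul, hφx, sub_self]
      intro v hv
      have := (Finset.sum_eq_zero_iff_of_nonneg (fun v hv =>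
        mul_nonneg (hw0 v hv) (sub_nonneg.2 (h v hv)))).1 hsum
      exact this v hv
    have hkey : ∀ v ∈ V, w v ≠ 0 → φ v = t := by
      intro v hv hwv
      have := hzero v hv
      rcases mul_eq_zero.1 this with h' | h'
      · exact absurd h' hwv
      · linarith [sub_eq_zero.1 h']
    rw [Finset.convexHull_eq]
    refine ⟨w, fun v hv => hw0 v (Finset.mem_filter.1 hv).1, ?_, ?_⟩
    · rw [Finset.sum_filter_of_ne (fun v hv hne => hkey v hv hne), hw1]
    · rw [Finset.centerMass_eq_of_sum_1 _ _
        (by rw [Finset.sum_filter_of_ne (fun v hv hne => hkey v hv hne), hw1]), hxsum]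
      rw [Finset.sum_filter_of_ne]
      · rfl
      · intro v hv hne
        exact hkey v hv (fun h0 => hne (by simp [h0]))
  · intro hx
    have hsub : (V.filter (fun v => φ v = t) : Finset (Fin n → ℚ)) ⊆ V := Finset.filter_subset _ _
    refine ⟨convexHull_mono (by exact_mod_cast Finset.coe_subset.2 hsub) hx, ?_⟩
    rw [Finset.convexHull_eq] at hx
    obtain ⟨w, hw0, hw1, hwx⟩ := hx
    rw [← hwx, Finset.centerMass_eq_of_sum_1 _ _ hw1, map_sum]
    calc ∑ v ∈ V.filter (fun v => φ v = t), φ (w v • id v)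
        = ∑ v ∈ V.filter (fun v => φ v = t), w v * t := by
          apply Finset.sum_congr rfl
          intro v hv
          rw [map_smul, smul_eq_mul]
          simp only [id_eq, (Finset.mem_filter.1 hv).2]
      _ = t := by rw [← Finset.sum_mul, hw1, one_mul]




lemma dualSep (U : Submodule ℚ (Fin n → ℚ)) (v : Fin n → ℚ) (hv : v ∉ U) :
    ∃ h : (Fin n → ℚ) →ₗ[ℚ] ℚ, (∀ u ∈ U, h u = 0) ∧ h v = 1 := by
  have hπ : U.mkQ v ≠ 0 := by
    rw [Submodule.mkQ_apply]
    simpa [Submodule.Quotient.mk_eq_zero] using hv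
  have : ¬ ∀ φ : Module.Dual ℚ ((Fin n → ℚ) ⧸ U), φ (U.mkQ v) = 0 := by
    rw [Module.forall_dual_apply_eq_zero_iff]; exact hπ
  push_neg at this
  obtain ⟨φ, hφ⟩ := this
  refine ⟨(φ (U.mkQ v))⁻¹ • (φ.comp U.mkQ), ?_, ?_⟩
  · intro u hu
    have : U.mkQ u = 0 := by
      rw [Submodule.mkQ_apply, Submodule.Quotient.mk_eq_zero]; exact hu
    simp [this]
  · simp only [LinearMap.smul_apply, LinearMap.coe_comp, Function.comp_apply, smul_eq_mul]
    exact inv_mul_cancel₀ hφ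

lemma vectorSpan_le_ker {S : Set (Fin n → ℚ)} (g : (Fin n → ℚ) →ₗ[ℚ] ℚ) (c : ℚ)
    (h : ∀ x ∈ S, g x = c) : VS S ≤ LinearMap.ker g := by
  show vectorSpan ℚ S ≤ _
  rw [vectorSpan_def]
  apply Submodule.span_le.2
  rintro z hz
  obtain ⟨x, hx, y, hy, rfl⟩ := hz
  simp [LinearMap.mem_ker, vsub_eq_sub, map_sub, h x hx, h y hy]

lemma sub_span_le {S : Set (Fin n → ℚ)} {w₀ : Fin n → ℚ}
    (U' : Submodule ℚ (Fin n → ℚ)) (h : ∀ w ∈ S, w - w₀ ∈ U') : VS S ≤ U' := by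
  show vectorSpan ℚ S ≤ _
  rw [vectorSpan_def]
  apply Submodule.span_le.2
  rintro z hz
  obtain ⟨x, hx, y, hy, rfl⟩ := hz
  show x -ᵥ y ∈ U'
  have : x -ᵥ y = (x - w₀) - (y - w₀) := by rw [vsub_eq_sub]; abel
  rw [this]
  exact U'.sub_mem (h x hx) (h y hy)

lemma expose_lt (W : Finset (Fin n → ℚ)) (g : (Fin n → ℚ) →ₗ[ℚ] ℚ) (c : ℚ)
    (hE : (W.filter (fun w => g w = c)).Nonempty) (hw : ∃ w ∈ W, g w ≠ c) :
    finrank ℚ (VS ((W.filter (fun w => g w = c)) : Set (Fin n → ℚ))) <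
      finrank ℚ (VS (W : Set (Fin n → ℚ))) := by
  obtain ⟨u, hu⟩ := hE
  obtain ⟨w, hwW, hwc⟩ := hw
  have huW : u ∈ W := (Finset.mem_filter.1 hu).1
  have huc : g u = c := (Finset.mem_filter.1 hu).2
  have hle : VS ((W.filter (fun w => g w = c)) : Set (Fin n → ℚ)) ≤
      VS (W : Set (Fin n → ℚ)) ⊓ LinearMap.ker g := by
    refine le_inf ?_ (vectorSpan_le_ker g c ?_)
    · exact vectorSpan_mono ℚ (by exact_mod_cast Finset.coe_subset.2 (Finset.filter_subset _ _))
    · intro x hx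
      exact (Finset.mem_filter.1 (Finset.mem_coe.1 hx)).2
  have hlt : VS (W : Set (Fin n → ℚ)) ⊓ LinearMap.ker g < VS (W : Set (Fin n → ℚ)) := by
    refine lt_of_le_of_ne inf_le_left ?_
    intro heq
    have hmem : w - u ∈ VS (W : Set (Fin n → ℚ)) := by
      simpa [vsub_eq_sub] using vsub_mem_vectorSpan ℚ (Finset.mem_coe.2 hwW) (Finset.mem_coe.2 huW)
    rw [← heq] at hmem
    have : g (w - u) = 0 := (Submodule.mem_inf.1 hmem).2
    rw [map_sub, huc, sub_eq_zero] at this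
    exact hwc this
  exact lt_of_le_of_lt (Submodule.finrank_mono hle) (Submodule.finrank_lt_finrank_of_lt hlt)


lemma exists_outside (W : Finset (Fin n → ℚ)) (w₀ : Fin n → ℚ)
    (U' : Submodule ℚ (Fin n → ℚ))
    (h : finrank ℚ U' < finrank ℚ (VS (W : Set (Fin n → ℚ)))) :
    ∃ w ∈ W, w - w₀ ∉ U' := by
  by_contra hcon
  push_neg at hcon
  have : VS (W : Set (Fin n → ℚ)) ≤ U' :=
    sub_span_le U' (fun w hw => hcon w (Finset.mem_coe.1 hw))
  exact absurd (Submodule.finrank_mono this) (not_le.2 h)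


lemma faceUp (W : Finset (Fin n → ℚ)) (g : (Fin n → ℚ) →ₗ[ℚ] ℚ) (c : ℚ)
    (hle : ∀ w ∈ W, g w ≤ c) (hne : (W.filter (fun w => g w = c)).Nonempty)
    (hj : finrank ℚ (VS ((W.filter fun w => g w = c) : Set (Fin n → ℚ))) + 1 <
      finrank ℚ (VS (W : Set (Fin n → ℚ)))) :
    ∃ (g' : (Fin n → ℚ) →ₗ[ℚ] ℚ) (c' : ℚ), (∀ w ∈ W, g' w ≤ c') ∧
      (W.filter (fun w => g' w = c')).Nonempty ∧
      finrank ℚ (VS ((W.filter fun w => g w = c) : Set (Fin n → ℚ))) <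
        finrank ℚ (VS ((W.filter fun w => g' w = c') : Set (Fin n → ℚ))) ∧
      finrank ℚ (VS ((W.filter fun w => g' w = c') : Set (Fin n → ℚ))) <
        finrank ℚ (VS (W : Set (Fin n → ℚ))) := by
  classical
  set E0 := W.filter (fun w => g w = c) with hE0def
  set U0 : Submodule ℚ (Fin n → ℚ) := VS (E0 : Set (Fin n → ℚ)) with hU0def
  obtain ⟨w₀, hw₀E⟩ := hne
  have hw₀W : w₀ ∈ W := (Finset.mem_filter.1 hw₀E).1
  have hgw₀ : g w₀ = c := (Finset.mem_filter.1 hw₀E).2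
  have hmemU0 : ∀ w ∈ E0, w - w₀ ∈ U0 := by
    intro w hw
    simpa [vsub_eq_sub] using vsub_mem_vectorSpan ℚ (Finset.mem_coe.2 hw) (Finset.mem_coe.2 hw₀E)
  -- find w₁
  have hjU0 : finrank ℚ U0 + 1 < finrank ℚ (VS (W : Set (Fin n → ℚ))) := hj
  obtain ⟨w₁, hw₁W, hw₁U0⟩ := exists_outside W w₀ U0 (by omega)
  have hw₁0 : w₁ - w₀ ≠ 0 := fun h => hw₁U0 (h ▸ U0.zero_mem)
  set U1 : Submodule ℚ (Fin n → ℚ) := U0 ⊔ (ℚ ∙ (w₁ - w₀)) with hU1def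
  have hU1rank : finrank ℚ U1 ≤ finrank ℚ U0 + 1 := by
    calc finrank ℚ U1 ≤ finrank ℚ U0 + finrank ℚ (ℚ ∙ (w₁ - w₀)) :=
          Submodule.finrank_add_le_finrank_add_finrank _ _
      _ = finrank ℚ U0 + 1 := by rw [finrank_span_singleton hw₁0]
  obtain ⟨w₂, hw₂W, hw₂U1⟩ := exists_outside W w₀ U1 (by omega)
  have hU0leU1 : U0 ≤ U1 := le_sup_left
  have hw₂U0 : w₂ - w₀ ∉ U0 := fun h => hw₂U1 (hU0leU1 h)
  set U2 : Submodule ℚ (Fin n → ℚ) := U0 ⊔ (ℚ ∙ (w₂ - w₀)) with hU2def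
  have hw₂U2 : w₂ - w₀ ∈ U2 := Submodule.mem_sup_right (Submodule.mem_span_singleton_self _)
  have hw₁U2 : w₁ - w₀ ∉ U2 := by
    intro hmem
    obtain ⟨u, hu, z, hz, heq⟩ := Submodule.mem_sup.1 hmem
    obtain ⟨t, rfl⟩ := Submodule.mem_span_singleton.1 hz
    rcases eq_or_ne t 0 with rfl | ht
    · rw [zero_smul, add_zero] at heq
      exact hw₁U0 (heq ▸ hu)
    · apply hw₂U1
      have : w₂ - w₀ = t⁻¹ • ((w₁ - w₀) - u) := by
        rw [← heq]
        rw [add_sub_cancel_left, smul_smul, inv_mul_cancel₀ ht, one_smul]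
      rw [this]
      refine U1.smul_mem _ (U1.sub_mem ?_ (hU0leU1 hu))
      exact Submodule.mem_sup_right (Submodule.mem_span_singleton_self _)
  obtain ⟨f, hf0, hf1⟩ := dualSep U2 (w₁ - w₀) hw₁U2
  have hfU0 : ∀ u ∈ U0, f u = 0 := fun u hu => hf0 u (Submodule.mem_sup_left hu)
  have hfw₁ : f w₁ = f w₀ + 1 := by
    have : f (w₁ - w₀) = 1 := hf1
    rw [map_sub] at this; linarith
  have hfw₂ : f w₂ = f w₀ := by
    have : f (w₂ - w₀) = 0 := hf0 _ hw₂U2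
    rw [map_sub] at this; linarith
  have hfE0 : ∀ w ∈ E0, f w = f w₀ := by
    intro w hw
    have : f (w - w₀) = 0 := hfU0 _ (hmemU0 w hw)
    rw [map_sub] at this; linarith
  set Sh := W.filter (fun w => f w₀ < f w) with hShdef
  have hw₁Sh : w₁ ∈ Sh := Finset.mem_filter.2 ⟨hw₁W, by rw [hfw₁]; linarith⟩
  have hShlt : ∀ w ∈ Sh, g w < c := by
    intro w hw
    obtain ⟨hwW, hwf⟩ := Finset.mem_filter.1 hw
    rcases lt_or_eq_of_le (hle w hwW) with h | h
    · exact h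
    · exact absurd (hfE0 w (Finset.mem_filter.2 ⟨hwW, h⟩)) (by linarith)
  set ratio : (Fin n → ℚ) → ℚ := fun w => (c - g w) / (f w - f w₀) with hratiodef
  have hShim : (Sh.image ratio).Nonempty := ⟨ratio w₁, Finset.mem_image_of_mem _ hw₁Sh⟩
  set ε := (Sh.image ratio).min' hShim with hεdef
  have hratiopos : ∀ w ∈ Sh, 0 < ratio w := by
    intro w hw
    exact div_pos (by linarith [hShlt w hw]) (by linarith [(Finset.mem_filter.1 hw).2])
  have hεmem : ε ∈ Sh.image ratio := Finset.min'_mem _ _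
  have hεpos : 0 < ε := by
    obtain ⟨w, hw, hweq⟩ := Finset.mem_image.1 hεmem
    exact hweq ▸ hratiopos w hw
  have hεle : ∀ w ∈ Sh, ε ≤ ratio w :=
    fun w hw => Finset.min'_le _ _ (Finset.mem_image_of_mem _ hw)
  set g' : (Fin n → ℚ) →ₗ[ℚ] ℚ := g + ε • f with hg'def
  set c' := c + ε * f w₀ with hc'def
  have hg'app : ∀ w, g' w = g w + ε * f w := by
    intro w; simp [hg'def, smul_eq_mul]
  have hle' : ∀ w ∈ W, g' w ≤ c' := by
    intro w hw
    rw [hg'app]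
    rcases le_or_gt (f w) (f w₀) with h | h
    · have := hle w hw
      nlinarith
    · have hwSh : w ∈ Sh := Finset.mem_filter.2 ⟨hw, h⟩
      have := hεle w hwSh
      rw [hratiodef] at this
      have hd : 0 < f w - f w₀ := by linarith
      rw [le_div_iff₀ hd] at this
      simp only [hc'def]; nlinarith
  have hE0E' : ∀ w ∈ E0, g' w = c' := by
    intro w hw
    rw [hg'app, (Finset.mem_filter.1 hw).2, hfE0 w hw, hc'def]
  -- the minimizer
  obtain ⟨ws, hwsSh, hwseq⟩ := Finset.mem_image.1 hεmem
  have hwsW : ws ∈ W := (Finset.mem_filter.1 hwsSh).1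
  have hd : 0 < f ws - f w₀ := by linarith [(Finset.mem_filter.1 hwsSh).2]
  have hwsE' : g' ws = c' := by
    have : ε = (c - g ws) / (f ws - f w₀) := hwseq.symm
    rw [eq_div_iff (ne_of_gt hd)] at this
    rw [hg'app]
    linear_combination this
  set E' := W.filter (fun w => g' w = c') with hE'def
  have hwsE'mem : ws ∈ E' := Finset.mem_filter.2 ⟨hwsW, hwsE'⟩
  have hE0subE' : E0 ⊆ E' := by
    intro w hw
    exact Finset.mem_filter.2 ⟨(Finset.mem_filter.1 hw).1, hE0E' w hw⟩
  have hwsU0 : ws - w₀ ∉ U0 := by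
    intro hmem
    have : f (ws - w₀) = 0 := hfU0 _ hmem
    rw [map_sub] at this; linarith
  -- lower bound
  have hlow : finrank ℚ U0 < finrank ℚ (VS (E' : Set (Fin n → ℚ))) := by
    have hsup : U0 ⊔ (ℚ ∙ (ws - w₀)) ≤ VS (E' : Set (Fin n → ℚ)) := by
      refine sup_le ?_ ?_
      · exact vectorSpan_mono ℚ (by exact_mod_cast Finset.coe_subset.2 hE0subE')
      · rw [Submodule.span_singleton_le_iff_mem]
        simpa [vsub_eq_sub] using vsub_mem_vectorSpan ℚ (Finset.mem_coe.2 hwsE'mem)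
          (Finset.mem_coe.2 (hE0subE' hw₀E))
    have hstrict : U0 < U0 ⊔ (ℚ ∙ (ws - w₀)) := by
      refine lt_of_le_of_ne le_sup_left ?_
      intro heq
      exact hwsU0 (heq ▸ (Submodule.mem_sup_right (Submodule.mem_span_singleton_self _) :
        ws - w₀ ∈ U0 ⊔ (ℚ ∙ (ws - w₀))))
    exact lt_of_lt_of_le (Submodule.finrank_lt_finrank_of_lt hstrict)
      (Submodule.finrank_mono hsup)
  -- upper bound
  have hup : finrank ℚ (VS (E' : Set (Fin n → ℚ))) < finrank ℚ (VS (W : Set (Fin n → ℚ))) := by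
    apply expose_lt W g' c' ⟨ws, hwsE'mem⟩
    refine ⟨w₂, hw₂W, ?_⟩
    intro heq
    rw [hg'app, hfw₂, hc'def] at heq
    have : g w₂ = c := by linarith
    exact hw₂U0 (hmemU0 w₂ (Finset.mem_filter.2 ⟨hw₂W, this⟩))
  exact ⟨g', c', hle', ⟨ws, hwsE'mem⟩, hlow, hup⟩
lemma facet_aux : ∀ (k : ℕ) (W : Finset (Fin n → ℚ)) (g : (Fin n → ℚ) →ₗ[ℚ] ℚ) (c : ℚ),
    (∀ w ∈ W, g w ≤ c) → (W.filter (fun w => g w = c)).Nonempty →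
    finrank ℚ (VS ((W.filter fun w => g w = c) : Set (Fin n → ℚ))) <
      finrank ℚ (VS (W : Set (Fin n → ℚ))) →
    finrank ℚ (VS (W : Set (Fin n → ℚ))) -
      finrank ℚ (VS ((W.filter fun w => g w = c) : Set (Fin n → ℚ))) ≤ k + 1 →
    ∃ (g' : (Fin n → ℚ) →ₗ[ℚ] ℚ) (c' : ℚ), (∀ w ∈ W, g' w ≤ c') ∧
      (W.filter (fun w => g' w = c')).Nonempty ∧
      finrank ℚ (VS ((W.filter fun w => g' w = c') : Set (Fin n → ℚ))) + 1 =
        finrank ℚ (VS (W : Set (Fin n → ℚ))) := by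
  intro k
  induction k with
  | zero =>
    intro W g c hle hne hlt hk
    exact ⟨g, c, hle, hne, by omega⟩
  | succ k ih =>
    intro W g c hle hne hlt hk
    by_cases heq : finrank ℚ (VS ((W.filter fun w => g w = c) : Set (Fin n → ℚ))) + 1 =
        finrank ℚ (VS (W : Set (Fin n → ℚ)))
    · exact ⟨g, c, hle, hne, heq⟩
    · obtain ⟨g', c', hle', hne', hlow, hup⟩ := faceUp W g c hle hne (by omega)
      exact ih W g' c' hle' hne' hup (by omega)

lemma facet (W : Finset (Fin n → ℚ)) (hi : 1 ≤ finrank ℚ (VS (W : Set (Fin n → ℚ)))) :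
    ∃ (g : (Fin n → ℚ) →ₗ[ℚ] ℚ) (c : ℚ), (∀ w ∈ W, g w ≤ c) ∧
      (W.filter (fun w => g w = c)).Nonempty ∧
      finrank ℚ (VS ((W.filter fun w => g w = c) : Set (Fin n → ℚ))) + 1 =
        finrank ℚ (VS (W : Set (Fin n → ℚ))) := by
  classical
  have hWne : W.Nonempty := by
    rcases W.eq_empty_or_nonempty with rfl | h
    · have hbot : (VS ((∅ : Finset (Fin n → ℚ)) : Set (Fin n → ℚ))) = ⊥ := by
        show vectorSpan ℚ _ = ⊥
        rw [Finset.coe_empty, vectorSpan_empty]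
      rw [hbot, finrank_bot] at hi
      omega
    · exact h
  obtain ⟨w₀, hw₀⟩ := hWne
  have hw₁ : ∃ w₁ ∈ W, w₁ ≠ w₀ := by
    by_contra hcon
    push_neg at hcon
    have hsub : (W : Set (Fin n → ℚ)) ⊆ {w₀} := fun w hw => hcon w (Finset.mem_coe.1 hw)
    have h2 : finrank ℚ (VS (W : Set (Fin n → ℚ))) ≤ finrank ℚ (⊥ : Submodule ℚ (Fin n → ℚ)) :=
      Submodule.finrank_mono (le_trans (vectorSpan_mono ℚ hsub)
        (le_of_eq (vectorSpan_singleton ℚ w₀)))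
    rw [finrank_bot] at h2
    omega
  obtain ⟨w₁, hw₁W, hw₁ne⟩ := hw₁
  obtain ⟨φ, _, hφ1⟩ := dualSep ⊥ (w₁ - w₀) (by
    simp only [Submodule.mem_bot]
    exact sub_ne_zero.2 hw₁ne)
  have hφne : φ w₁ = φ w₀ + 1 := by
    have : φ (w₁ - w₀) = 1 := hφ1
    rw [map_sub] at this; linarith
  have him : (W.image φ).Nonempty := ⟨φ w₀, Finset.mem_image_of_mem _ hw₀⟩
  set c₀ := (W.image φ).max' him with hc₀def
  have hle : ∀ w ∈ W, φ w ≤ c₀ := fun w hw => Finset.le_max' _ _ (Finset.mem_image_of_mem _ hw)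
  have hne : (W.filter (fun w => φ w = c₀)).Nonempty := by
    obtain ⟨w, hw, hweq⟩ := Finset.mem_image.1 ((W.image φ).max'_mem him)
    exact ⟨w, Finset.mem_filter.2 ⟨hw, hweq⟩⟩
  have hproper : ∃ w ∈ W, φ w ≠ c₀ := by
    by_contra hcon
    push_neg at hcon
    have h0 := hcon w₀ hw₀
    have h1 := hcon w₁ hw₁W
    rw [hφne] at h1
    linarith
  have hlt := expose_lt W φ c₀ hne hproper
  exact facet_aux (finrank ℚ (VS (W : Set (Fin n → ℚ)))) W φ c₀ hle hne hlt (Nat.le_trans (Nat.sub_le _ _) (Nat.le_succ _))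


lemma vs_hull (s : Set (Fin n → ℚ)) : vectorSpan ℚ (convexHull ℚ s) = vectorSpan ℚ s := by
  rw [← direction_affineSpan, affineSpan_convexHull, direction_affineSpan]

lemma faceDown (P F : Set (Fin n → ℚ)) (hP : IsRatPolytope P) {i : ℕ} (hi : 1 ≤ i)
    (hF : IsIFace P F i) : ∃ F', IsIFace P F' (i - 1) ∧ F' ⊆ F := by
  classical
  obtain ⟨V, hPV⟩ := hP
  obtain ⟨hface, hFne, hFdim⟩ := hF
  rcases hface with rfl | ⟨f, c₀, hfle, hFeq⟩
  · -- F = P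
    have hVdim : finrank ℚ (VS (V : Set (Fin n → ℚ))) = i := by
      rw [← hFdim]
      show _ = finrank ℚ (vectorSpan ℚ F)
      rw [hPV, vs_hull]
    obtain ⟨g, c, hle, hne, hdim⟩ := facet V (by omega)
    obtain ⟨v₀, hv₀⟩ := hne
    refine ⟨convexHull ℚ ((V.filter fun w => g w = c : Finset (Fin n → ℚ)) : Set (Fin n → ℚ)),
      ⟨Or.inr ⟨g, c, ?_, ?_⟩, ?_, ?_⟩, ?_⟩
    · rw [hPV]; exact hull_le V g c hle
    · rw [hPV, exp_hull V g c hle]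
    · exact ⟨v₀, subset_convexHull ℚ _ (Finset.mem_coe.2 hv₀)⟩
    · show finrank ℚ (vectorSpan ℚ _) = i - 1
      rw [vs_hull]
      unfold VS at hdim hVdim
      omega
    · rw [hPV]
      exact convexHull_mono (Finset.coe_subset.2 (Finset.filter_subset _ _))
  · -- F is a proper face
    set V' := V.filter (fun v => f v = c₀) with hV'def
    have hVP : ∀ v ∈ V, f v ≤ c₀ := fun v hv =>
      hfle v (hPV ▸ subset_convexHull ℚ (V : Set (Fin n → ℚ)) (Finset.mem_coe.2 hv))
    have hFhull : F = convexHull ℚ (V' : Set (Fin n → ℚ)) := by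
      rw [hFeq, hPV]
      exact exp_hull V f c₀ hVP
    have hV'ne : V'.Nonempty := by
      obtain ⟨x, hx⟩ := hFne
      rw [hFhull] at hx
      rcases V'.eq_empty_or_nonempty with h0 | h
      · rw [h0] at hx; simp at hx
      · exact h
    have hV'dim : finrank ℚ (VS (V' : Set (Fin n → ℚ))) = i := by
      rw [← hFdim]
      show _ = finrank ℚ (vectorSpan ℚ F)
      rw [hFhull, vs_hull]
    obtain ⟨g, d, hgle, hV''ne, hV''dim⟩ := facet V' (by omega)
    set V'' := V'.filter (fun v => g v = d) with hV''def
    -- choose ε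
    set B := V.filter (fun v => ¬ f v = c₀ ∧ d < g v) with hBdef
    set ratio : (Fin n → ℚ) → ℚ := fun v => (c₀ - f v) / (g v - d) with hratiodef
    have hinsne : (insert (1 : ℚ) (B.image ratio)).Nonempty := Finset.insert_nonempty _ _
    set m := (insert (1 : ℚ) (B.image ratio)).min' hinsne with hmdef
    have hmpos : 0 < m := by
      have hmem : m ∈ insert (1 : ℚ) (B.image ratio) := Finset.min'_mem _ _
      rcases Finset.mem_insert.1 hmem with h1 | h2
      · rw [h1]; norm_num
      · obtain ⟨v, hv, hveq⟩ := Finset.mem_image.1 h2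
        have hmf := Finset.mem_filter.1 hv
        have hvV := hmf.1
        have hvne := hmf.2.1
        have hvd := hmf.2.2
        have hflt : f v < c₀ := lt_of_le_of_ne (hVP v hvV) hvne
        rw [← hveq]
        exact div_pos (by linarith) (by linarith)
    set ε := m / 2 with hεdef
    have hεpos : 0 < ε := by rw [hεdef]; linarith
    have hεlt : ∀ v ∈ B, ε * (g v - d) < c₀ - f v := by
      intro v hv
      have hmf := Finset.mem_filter.1 hv
      have hvV := hmf.1
      have hvne := hmf.2.1
      have hvd := hmf.2.2
      have hflt : f v < c₀ := lt_of_le_of_ne (hVP v hvV) hvne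
      have hm_le : m ≤ ratio v :=
        Finset.min'_le _ _ (Finset.mem_insert_of_mem (Finset.mem_image_of_mem _ hv))
      have hε_lt : ε < ratio v := by rw [hεdef]; linarith
      have hd : 0 < g v - d := by linarith
      rw [hratiodef] at hε_lt
      calc ε * (g v - d) < ((c₀ - f v) / (g v - d)) * (g v - d) := by
            exact mul_lt_mul_of_pos_right hε_lt hd
        _ = c₀ - f v := div_mul_cancel₀ _ (ne_of_gt hd)
    set φ : (Fin n → ℚ) →ₗ[ℚ] ℚ := f + ε • g with hφdef
    set t := c₀ + ε * d with htdef
    have hφapp : ∀ v, φ v = f v + ε * g v := by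
      intro v; simp [hφdef, smul_eq_mul]
    have hkey : ∀ v ∈ V, φ v ≤ t ∧ (φ v = t ↔ v ∈ V'') := by
      intro v hv
      by_cases hv' : f v = c₀
      · have hvV' : v ∈ V' := Finset.mem_filter.2 ⟨hv, hv'⟩
        have hgv : g v ≤ d := hgle v hvV'
        constructor
        · rw [hφapp, hv', htdef]; nlinarith
        · constructor
          · intro heq
            rw [hφapp, hv', htdef] at heq
            have : g v = d := by
              have := mul_left_cancel₀ (ne_of_gt hεpos) (by linarith : ε * g v = ε * d)
              exact this
            exact Finset.mem_filter.2 ⟨hvV', this⟩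
          · intro hmem
            rw [hφapp, hv', (Finset.mem_filter.1 hmem).2, htdef]
      · have hflt : f v < c₀ := lt_of_le_of_ne (hVP v hv) hv'
        have hstrict : φ v < t := by
          rw [hφapp, htdef]
          rcases le_or_gt (g v) d with hgv | hgv
          · nlinarith
          · have := hεlt v (Finset.mem_filter.2 ⟨hv, hv', hgv⟩)
            linarith
        refine ⟨le_of_lt hstrict, ?_, ?_⟩
        · intro heq; exact absurd heq (ne_of_lt hstrict)
        · intro hmem
          exact absurd (Finset.mem_filter.1 (Finset.mem_filter.1 hmem).1).2 hv'
    have hφle : ∀ v ∈ V, φ v ≤ t := fun v hv => (hkey v hv).1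
    have hfilter : V.filter (fun v => φ v = t) = V'' := by
      ext v
      constructor
      · intro hv
        obtain ⟨hvV, hveq⟩ := Finset.mem_filter.1 hv
        exact ((hkey v hvV).2).1 hveq
      · intro hv
        have hvV : v ∈ V := Finset.filter_subset _ _ ((Finset.filter_subset _ _) hv)
        exact Finset.mem_filter.2 ⟨hvV, ((hkey v hvV).2).2 hv⟩
    obtain ⟨v₀, hv₀⟩ := hV''ne
    refine ⟨convexHull ℚ (V'' : Set (Fin n → ℚ)), ⟨Or.inr ⟨φ, t, ?_, ?_⟩, ?_, ?_⟩, ?_⟩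
    · rw [hPV]; exact hull_le V φ t hφle
    · rw [hPV, exp_hull V φ t hφle, hfilter]
    · exact ⟨v₀, subset_convexHull ℚ _ (Finset.mem_coe.2 hv₀)⟩
    · show finrank ℚ (vectorSpan ℚ _) = i - 1
      rw [vs_hull]
      unfold VS at hV''dim hV'dim
      omega
    · rw [hFhull]
      exact convexHull_mono (Finset.coe_subset.2 (Finset.filter_subset _ _))


end Aux

/-- the rational indices divide each other: `rd_{i-1}(P)/rd_i(P) ∈ ℤ`. -/
theorem stmt3 {n : ℕ} (P : Set (Fin n → ℚ)) (hP : IsRatPolytope P)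
    (i : ℕ) (hi : 1 ≤ i) (hin : i ≤ n)
    (q1 q2 : ℚ) (h1 : IsRatIIndex P (i - 1) q1) (h2 : IsRatIIndex P i q2) :
    ∃ z : ℤ, q1 = (z : ℚ) * q2 := by
  obtain ⟨hq1pos, hq1all, hq1min⟩ := h1
  obtain ⟨hq2pos, hq2all, hq2min⟩ := h2
  set z := ⌊q1 / q2⌋ with hzdef
  set r := q1 - (z : ℚ) * q2 with hrdef
  have hr0 : 0 ≤ r := by
    have := Int.floor_le (q1 / q2)
    rw [← hzdef] at this
    have : (z : ℚ) * q2 ≤ q1 := by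
      rw [← div_mul_cancel₀ q1 (ne_of_gt hq2pos)]
      exact mul_le_mul_of_nonneg_right this (le_of_lt hq2pos)
    linarith
  have hrlt : r < q2 := by
    have := Int.lt_floor_add_one (q1 / q2)
    rw [← hzdef] at this
    have : q1 < ((z : ℚ) + 1) * q2 := by
      rw [← div_mul_cancel₀ q1 (ne_of_gt hq2pos)]
      exact mul_lt_mul_of_pos_right this hq2pos
    rw [hrdef]
    linarith
  have hkey : ∀ F, IsIFace P F i → DilAffHasLattice F r := by
    intro F hF
    have hFne : F.Nonempty := hF.2.1
    obtain ⟨F', hF'face, hF'sub⟩ := faceDown P F hP hi hF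
    have d1 : DilAffHasLattice F q1 := dil_mono hF'sub (hq1all F' hF'face)
    have d2 : DilAffHasLattice F q2 := hq2all F hF
    have dz : DilAffHasLattice F ((z : ℚ) * q2) := dil_zmul hFne d2 z
    exact dil_sub hFne d1 dz
  rcases eq_or_lt_of_le hr0 with heq | hlt
  · exact ⟨z, by rw [hrdef] at heq; linarith⟩
  · have := hq2min r hlt hkey
    linarith
end

section
/- Let p: Q → Q be a rational quasi-polynomial p(r) = p_n r^n + sum_{i=0}^{n-1} p_i(r) r^i of degree n >= 1 with constant nonzero leading coefficient p_n and period d > 0 (each p_i periodic with period d). Suppose there is an open interval (r_1, r_2) ⊂ Q and constants c_k in Q with p(r + kd) = c_k for all r in (r_1, r_2) and all k in Z_{>=0}. Then each p_i restricted to (r_1, r_2) is a polynomial of degree n - i; moreover, if p_n > 0 then the leading coefficient of p_{n-1} on (r_1,r_2) is negative. -/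
/-!
For `r` in the interval, let `P_r` be the polynomial obtained by freezing the periodic
coefficients at `r`. Periodicity gives `P_r (r + k d) = c_k` for all `k`, so the Taylor shifts
`P_r (X + r)` agree at the infinitely many points `k d` and are therefore one polynomial `B`,
independent of `r`. Hence `P_r = B (X - r)`, and the coefficient `p_i (r)` of `X ^ i` is the
`i`-th Hasse derivative of `B` evaluated at `-r`: a polynomial in `r` of degree `n - i` with
leading coefficient `(-1) ^ (n - i) * choose n i * p_n`, which is `-n p_n` for `i = n - 1`.
-/

open Pointwise

open Polynomial Finset

namespace Polynomial

theorem coeff_taylor_neg {R : Type*} [CommRing R] (g : R[X]) (r : R) (i : ℕ) :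
    (taylor (-r) g).coeff i = ((hasseDeriv i g).comp (-X)).eval r := by
  rw [taylor_coeff, eval_comp, eval_neg, eval_X]

section Shift

variable {R : Type*} [CommRing R] [IsDomain R] [CharZero R]

theorem eq_of_eval_nat_mul_eq {f g : R[X]} {d : R} (hd : d ≠ 0)
    (h : ∀ k : ℕ, f.eval (k * d) = g.eval (k * d)) : f = g := by
  refine eq_of_infinite_eval_eq f g
    ((Set.infinite_range_of_injective (f := fun k : ℕ => (k : R) * d) ?_).mono ?_)
  · exact fun a b hab => Nat.cast_injective (mul_right_cancel₀ hd hab)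
  · rintro _ ⟨k, rfl⟩
    exact h k

theorem taylor_eq_of_eval_add_nat_mul_eq {f g : R[X]} {r s d : R} (hd : d ≠ 0)
    (h : ∀ k : ℕ, f.eval (r + k * d) = g.eval (s + k * d)) : taylor r f = taylor s g :=
  eq_of_eval_nat_mul_eq hd fun k => by simpa only [taylor_eval, add_comm] using h k

theorem natDegree_hasseDeriv_comp_neg_X (g : R[X]) (i : ℕ) :
    ((hasseDeriv i g).comp (-X)).natDegree = g.natDegree - i := by
  rw [natDegree_comp, natDegree_neg, natDegree_X, mul_one, natDegree_hasseDeriv]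

theorem leadingCoeff_hasseDeriv {g : R[X]} {i : ℕ} (hi : i ≤ g.natDegree) :
    (hasseDeriv i g).leadingCoeff = g.natDegree.choose i * g.leadingCoeff := by
  rw [leadingCoeff, natDegree_hasseDeriv, hasseDeriv_coeff, Nat.sub_add_cancel hi, leadingCoeff]

theorem leadingCoeff_hasseDeriv_comp_neg_X {g : R[X]} {i : ℕ} (hi : i ≤ g.natDegree) :
    ((hasseDeriv i g).comp (-X)).leadingCoeff =
      g.natDegree.choose i * g.leadingCoeff * (-1) ^ (g.natDegree - i) := by
  rw [leadingCoeff_comp (by rw [natDegree_neg, natDegree_X]; exact one_ne_zero),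
    leadingCoeff_hasseDeriv hi, natDegree_hasseDeriv, leadingCoeff_neg, leadingCoeff_X]

end Shift

theorem degree_sum_range_C_mul_X_pow_lt {R : Type*} [Semiring R] (b : ℕ → R) (n : ℕ) :
    (∑ i ∈ range n, C (b i) * X ^ i).degree < (n : WithBot ℕ) :=
  mem_degreeLT.1 <| Submodule.sum_mem _ fun i hi =>
    mem_degreeLT.2 <| (degree_C_mul_X_pow_le i (b i)).trans_lt <|
      Nat.cast_lt.2 (mem_range.1 hi)

end Polynomial

section FrozenPoly

variable {R : Type*} [CommRing R]

/-- The polynomial in `x` whose value at `x = r + k d` is the quasi-polynomial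
`a x ^ n + ∑ i < n, p i x * x ^ i`, once the `d`-periodic coefficients are frozen at `r`. -/
noncomputable def frozenPoly (a : R) (p : ℕ → R → R) (n : ℕ) (r : R) : R[X] :=
  C a * X ^ n + ∑ i ∈ range n, C (p i r) * X ^ i

theorem eval_frozenPoly (a : R) (p : ℕ → R → R) (n : ℕ) (r x : R) :
    (frozenPoly a p n r).eval x = a * x ^ n + ∑ i ∈ range n, p i r * x ^ i := by
  simp only [frozenPoly, eval_add, eval_mul, eval_C, eval_pow, eval_X, eval_finsetSum]

theorem coeff_frozenPoly_of_lt (a : R) (p : ℕ → R → R) {n i : ℕ} (r : R) (hi : i < n) :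
    (frozenPoly a p n r).coeff i = p i r := by
  simp only [frozenPoly, coeff_add, if_neg hi.ne, finsetSum_coeff,
    coeff_C_mul, coeff_X_pow, mul_ite, mul_one, mul_zero, sum_ite_eq, mem_range, if_pos hi,
    zero_add]

theorem degree_frozenPoly_sum_lt [Nontrivial R] {a : R} (ha : a ≠ 0) (p : ℕ → R → R)
    (n : ℕ) (r : R) : (∑ i ∈ range n, C (p i r) * X ^ i).degree < (C a * X ^ n).degree := by
  rw [degree_C_mul_X_pow n ha]
  exact degree_sum_range_C_mul_X_pow_lt _ n

theorem natDegree_frozenPoly [Nontrivial R] {a : R} (ha : a ≠ 0) (p : ℕ → R → R) (n : ℕ)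
    (r : R) : (frozenPoly a p n r).natDegree = n := by
  rw [frozenPoly, natDegree_add_eq_left_of_degree_lt (degree_frozenPoly_sum_lt ha p n r),
    natDegree_C_mul_X_pow n a ha]

theorem leadingCoeff_frozenPoly [Nontrivial R] {a : R} (ha : a ≠ 0) (p : ℕ → R → R) (n : ℕ)
    (r : R) : (frozenPoly a p n r).leadingCoeff = a := by
  rw [frozenPoly, leadingCoeff_add_of_degree_lt' (degree_frozenPoly_sum_lt ha p n r),
    leadingCoeff_C_mul_X_pow]

end FrozenPoly

/-- a rational quasi-polynomial with constant nonzero leading coefficient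
which is constant on translates `(r₁ + kd, r₂ + kd)` of an interval has coefficients
which are polynomials of degree `n - i` on `(r₁, r₂)`; if the leading coefficient is
positive, the leading coefficient of `p_{n-1}` is negative. -/
theorem stmt7 (n : ℕ) (hn : 1 ≤ n) (pn : ℚ) (hpn : pn ≠ 0)
    (p : ℕ → ℚ → ℚ) (d : ℚ) (hd : 0 < d) (hper : ∀ i < n, IsPeriodic (p i) d)
    (r1 r2 : ℚ) (hr : r1 < r2) (c : ℕ → ℚ)
    (hc : ∀ r : ℚ, r1 < r → r < r2 → ∀ k : ℕ,
      pn * (r + k * d) ^ n +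
        ∑ i ∈ Finset.range n, p i (r + k * d) * (r + k * d) ^ i = c k) :
    ∃ q : ℕ → Polynomial ℚ,
      (∀ i < n, (q i).natDegree = n - i ∧
        ∀ r : ℚ, r1 < r → r < r2 → p i r = (q i).eval r) ∧
      (0 < pn → (q (n - 1)).leadingCoeff < 0) := by
  set P := frozenPoly pn p n
  have hPc : ∀ r, r1 < r → r < r2 → ∀ k : ℕ, (P r).eval (r + k * d) = c k := by
    intro r h1 h2 k
    rw [← hc r h1 h2 k, eval_frozenPoly]
    congr 1
    exact sum_congr rfl fun i hi => by
      rw [Function.Periodic.nat_mul (hper i (mem_range.1 hi)) k r]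
  obtain ⟨r0, h01, h02⟩ := exists_between hr
  set B := taylor r0 (P r0)
  have hB : ∀ r, r1 < r → r < r2 → taylor r (P r) = B := fun r h1 h2 =>
    taylor_eq_of_eval_add_nat_mul_eq hd.ne' fun k => by rw [hPc r h1 h2, hPc r0 h01 h02]
  have hBdeg : B.natDegree = n := by rw [natDegree_taylor, natDegree_frozenPoly hpn]
  refine ⟨fun i => (hasseDeriv i B).comp (-X), fun i hi => ⟨?_, fun r h1 h2 => ?_⟩, fun hpos => ?_⟩
  · rw [natDegree_hasseDeriv_comp_neg_X, hBdeg]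
  · rw [← coeff_frozenPoly_of_lt pn p r hi, ← coeff_taylor_neg, ← hB r h1 h2, taylor_taylor,
      neg_add_cancel, taylor_zero]
  · rw [leadingCoeff_hasseDeriv_comp_neg_X (by omega), hBdeg, leadingCoeff_taylor,
      leadingCoeff_frozenPoly hpn, Nat.sub_sub_self hn, Nat.choose_symm hn, Nat.choose_one_right,
      pow_one, mul_neg_one, neg_lt_zero]
    positivity
end

section
/- Let T ⊂ R^2 be the triangle with vertices (0,0), ((s_1/t_1)(a/b), a/b), ((s_2/t_2)(a/b), a/b) with a,b,t_1,t_2 positive integers, s_1,s_2 integers, s_2/t_2 > s_1/t_1, gcd(a,b)=gcd(s_1,t_1)=gcd(s_2,t_2)=1. Then the linear coefficient of the rational Ehrhart quasi-polynomial of T is Q_1(T,r) = (a/b)·[ (t_1+t_2)/(2 t_1 t_2) - ({ar/b} - 1/2)(s_2/t_2 - s_1/t_1) ], where {x} denotes the fractional part of x. -/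
open Pointwise

/-- The triangle `T = conv((0,0), ((s₁/t₁)(a/b), a/b), ((s₂/t₂)(a/b), a/b))`. -/
def Tri (a b : ℕ) (s1 s2 : ℤ) (t1 t2 : ℕ) : Set (Fin 2 → ℚ) :=
  convexHull ℚ {![0, 0], ![((s1 : ℚ) / t1) * ((a : ℚ) / b), (a : ℚ) / b],
    ![((s2 : ℚ) / t2) * ((a : ℚ) / b), (a : ℚ) / b]}

/-! Counting the lattice points of `rT` row by row along the lines `y = 0, 1, …, N`, `N = ⌊ar/b⌋`,
gives `#(rT ∩ ℤ²) = (c₂ - c₁) N(N+1)/2 + ∑_{y ≤ N} (1 - {c₂y} - {-c₁y})` with `cᵢ = sᵢ/tᵢ`.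
The summand is `t₁t₂`-periodic in `y` with block sum `(t₁ + t₂)/2`, because `y ↦ sᵢy mod tᵢ`
permutes the residues modulo `tᵢ`. For a common period `P` of the `Qᵢ` that is a multiple of
`bt₁t₂`, both sides of `#((r + nP)T ∩ ℤ²) = ∑ Qᵢ(T, r)(r + nP)ⁱ` are quadratic polynomials in `n`,
and comparing them at `n = 0, 1, 2` determines `Q₁(T, r)`. -/

open Finset Function

namespace Function.Periodic

variable {M : Type*} [AddCommMonoid M] {g : ℕ → M} {L : ℕ}

theorem sum_range_add_period (hg : Periodic g L) (N : ℕ) :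
    ∑ j ∈ range (N + L), g j = ∑ j ∈ range N, g j + ∑ j ∈ range L, g j := by
  induction N with
  | zero => simp
  | succ N ih =>
    rw [show N + 1 + L = N + L + 1 by omega, sum_range_succ, ih, sum_range_succ, hg N]
    abel

theorem sum_range_add_mul_period (hg : Periodic g L) (N k : ℕ) :
    ∑ j ∈ range (N + k * L), g j = ∑ j ∈ range N, g j + k • ∑ j ∈ range L, g j := by
  induction k with
  | zero => simp
  | succ k ih =>
    rw [add_mul, one_mul, ← add_assoc, hg.sum_range_add_period, ih, succ_nsmul, add_assoc]

theorem natCast_of_num_dvd {α : Type*} {f : ℚ → α} {p : ℚ} (h : Periodic f p)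
    (hp : 0 < p) {k : ℕ} (hk : p.num.toNat ∣ k) : Periodic f k := by
  obtain ⟨j, rfl⟩ := hk
  have hnum : ((p.num.toNat : ℕ) : ℚ) = p.den * p := by
    rw [Rat.den_mul_eq_num]; exact_mod_cast Int.toNat_of_nonneg (Rat.num_pos.2 hp).le
  have : ((p.num.toNat * j : ℕ) : ℚ) = ((j * p.den : ℕ) : ℚ) * p := by
    push_cast [hnum]; ring
  rw [this]
  exact h.nat_mul _

end Function.Periodic

theorem sum_range_natCast_mul_two {K : Type*} [CommRing K] (n : ℕ) :
    (∑ i ∈ range n, (i : K)) * 2 = n * (n - 1) := by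
  induction n with
  | zero => simp
  | succ n ih => rw [sum_range_succ, add_mul, ih]; push_cast; ring

theorem periodic_fract_div_mul (s : ℤ) (t : ℕ) :
    Periodic (fun y : ℕ ↦ Int.fract ((s : ℚ) / t * y)) t := by
  intro y
  rcases eq_or_ne t 0 with rfl | ht
  · simp
  have : (s : ℚ) / t * ((y + t : ℕ) : ℚ) = s / t * y + s := by
    push_cast; field_simp
  simp only [this, Int.fract_add_intCast]

theorem sum_fract_div_mul_range {s : ℤ} {t : ℕ} (ht : 0 < t) (hst : Int.gcd s t = 1) :
    ∑ y ∈ range t, Int.fract ((s : ℚ) / t * y) = ((t : ℚ) - 1) / 2 := by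
  set i : ℕ → ℕ := fun y ↦ (s * y % t).toNat
  have hmod : ∀ y : ℕ, ((i y : ℕ) : ℤ) = s * y % t := fun y ↦
    Int.toNat_of_nonneg (Int.emod_nonneg _ (by omega))
  have hi : ∀ y ∈ range t, i y ∈ range t := fun y _ ↦ by
    have hlt := Int.emod_lt_of_pos (s * y) (by omega : (0 : ℤ) < t)
    have hy := hmod y
    rw [mem_range]; omega
  have i_inj : Set.InjOn i (range t) := by
    intro x hx y hy hxy
    have hxy' : s * x ≡ s * y [ZMOD t] := by
      rw [Int.ModEq, ← hmod, ← hmod, hxy]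
    have hxy'' := Int.ModEq.cancel_left_div_gcd (by omega) hxy'
    rw [Int.gcd_comm, hst, Nat.cast_one, Int.ediv_one, Int.natCast_modEq_iff] at hxy''
    exact hxy''.eq_of_lt_of_lt (mem_range.1 hx) (mem_range.1 hy)
  have i_surj : Set.SurjOn i (range t) (range t) :=
    surjOn_of_injOn_of_card_le i hi i_inj le_rfl
  have hterm : ∀ y ∈ range t, Int.fract ((s : ℚ) / t * y) = (i y : ℚ) / t := fun y _ ↦ by
    rw [div_mul_eq_mul_div, show (s : ℚ) * y = ((s * y : ℤ) : ℚ) by push_cast; ring,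
      Int.fract_div_intCast_eq_div_intCast_mod, ← hmod, Int.cast_natCast]
  rw [sum_nbij (g := fun x : ℕ ↦ (x : ℚ) / t) i hi i_inj i_surj hterm, ← sum_div,
    div_eq_iff (by positivity)]
  linarith [sum_range_natCast_mul_two (K := ℚ) t]

theorem sum_fract_div_mul_range_mul {s : ℤ} {t : ℕ} (ht : 0 < t) (hst : Int.gcd s t = 1)
    (k : ℕ) :
    ∑ y ∈ range (k * t), Int.fract ((s : ℚ) / t * y) = k * (((t : ℚ) - 1) / 2) := by
  simpa [sum_fract_div_mul_range ht hst] using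
    (periodic_fract_div_mul s t).sum_range_add_mul_period 0 k

theorem floor_sub_ceil_add_one {R : Type*} [CommRing R] [LinearOrder R] [IsStrictOrderedRing R]
    [FloorRing R] (u v : R) :
    (⌊v⌋ : R) - ⌈u⌉ + 1 = v - u + (1 - Int.fract v - Int.fract (-u)) := by
  have hv := Int.floor_add_fract v
  have hu := Int.floor_add_fract (-u)
  rw [Int.floor_neg, Int.cast_neg] at hu
  linear_combination hv + hu

namespace IsRatEhrhartCoeffs

variable {n d : ℕ} {X : Set (Fin n → ℚ)} {Q : ℕ → ℚ → ℚ}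

theorem exists_nat_period (hQ : IsRatEhrhartCoeffs X d Q) :
    ∃ m : ℕ, 0 < m ∧ ∀ i ≤ d, Periodic (Q i) m := by
  choose p hp hper using hQ.1
  refine ⟨∏ i ∈ range (d + 1), (p i).num.toNat, prod_pos fun i _ ↦ ?_, fun i hi ↦ ?_⟩
  · exact Int.lt_toNat.2 (Rat.num_pos.2 (hp i))
  · exact Periodic.natCast_of_num_dvd (hper i) (hp i)
      (dvd_prod_of_mem _ (mem_range_succ_iff.2 hi))

theorem latticeCount_add_nat_mul (hQ : IsRatEhrhartCoeffs X d Q) {P : ℚ} (hP : 0 ≤ P)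
    (hper : ∀ i ≤ d, Periodic (Q i) P) {r : ℚ} (hr : 0 ≤ r) (k : ℕ) :
    (latticeCount X (r + k * P) : ℚ) = ∑ i ∈ range (d + 1), Q i r * (r + k * P) ^ i := by
  rw [hQ.2 _ (by positivity)]
  refine sum_congr rfl fun i hi ↦ ?_
  rw [(hper i (mem_range_succ_iff.1 hi)).nat_mul k r]

end IsRatEhrhartCoeffs

theorem linear_coeff_eq_of_quadratic_eq {K : Type*} [Field K] [CharZero K] {α β γ A B C r P : K}
    (hP : P ≠ 0)
    (h : ∀ n : ℕ, n ≤ 2 → α + β * n + γ * n ^ 2 = A + B * (r + n * P) + C * (r + n * P) ^ 2) :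
    B = β / P - 2 * r * γ / P ^ 2 := by
  have h0 := h 0 (by norm_num)
  have h1 := h 1 (by norm_num)
  have h2 := h 2 (by norm_num)
  push_cast at h0 h1 h2
  field_simp
  linear_combination (-P) * (h1 - h0) + (2 * r + P) / 2 * (h2 - 2 * h1 + h0)

def apexTriangle (c1 c2 h : ℚ) : Set (Fin 2 → ℚ) :=
  convexHull ℚ {![0, 0], ![c1 * h, h], ![c2 * h, h]}

theorem smul_Tri (a b : ℕ) (s1 s2 : ℤ) (t1 t2 : ℕ) (r : ℚ) :
    r • Tri a b s1 s2 t1 t2 = apexTriangle (s1 / t1) (s2 / t2) (a * r / b) := by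
  rw [Tri, apexTriangle, ← convexHull_smul, Set.smul_set_insert, Set.smul_set_insert,
    Set.smul_set_singleton]
  have hh : r * (a / b) = a * r / b := by ring
  have hc : ∀ c : ℚ, r * (c * (a / b)) = c * (a * r / b) := fun c ↦ by ring
  simp only [Matrix.smul_cons, smul_eq_mul, Matrix.smul_empty, mul_zero, hh, hc]

theorem mem_apexTriangle {c1 c2 h : ℚ} (hc : c1 < c2) (hh : 0 ≤ h) {x : Fin 2 → ℚ} :
    x ∈ apexTriangle c1 c2 h ↔ 0 ≤ x 1 ∧ x 1 ≤ h ∧ c1 * x 1 ≤ x 0 ∧ x 0 ≤ c2 * x 1 := by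
  constructor
  · refine fun hx ↦ convexHull_min
      (t := {x : Fin 2 → ℚ | 0 ≤ x 1 ∧ x 1 ≤ h ∧ c1 * x 1 ≤ x 0 ∧ x 0 ≤ c2 * x 1}) ?_ ?_ hx
    · rintro v (rfl | rfl | rfl) <;> simp_all <;> nlinarith
    · rintro u ⟨hu1, hu2, hu3, hu4⟩ v ⟨hv1, hv2, hv3, hv4⟩ μ ν hμ hν hμν
      simp only [Set.mem_ofPred_eq, Pi.add_apply, Pi.smul_apply, smul_eq_mul]
      refine ⟨by positivity, ?_, ?_, ?_⟩ <;> nlinarith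
  · rintro ⟨h1, h2, h3, h4⟩
    rw [apexTriangle]
    rcases hh.eq_or_lt with rfl | hh
    · have hx1 : x 1 = 0 := le_antisymm h2 h1
      have hx : x = ![0, 0] := by
        ext i; fin_cases i <;> simp_all [le_antisymm_iff]
      exact hx ▸ subset_convexHull ℚ _ (by simp)
    set V : Fin 3 → Fin 2 → ℚ := ![![0, 0], ![c1 * h, h], ![c2 * h, h]]
    set w : Fin 3 → ℚ := ![1 - x 1 / h, (c2 * x 1 - x 0) / ((c2 - c1) * h),
      (x 0 - c1 * x 1) / ((c2 - c1) * h)]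
    have hc' : c2 - c1 ≠ 0 := by linarith
    have hd : 0 < (c2 - c1) * h := mul_pos (by linarith) hh
    have hw0 : ∀ i ∈ univ, 0 ≤ w i := by
      intro i _
      fin_cases i
      · exact sub_nonneg.2 ((div_le_one hh).2 h2)
      · exact div_nonneg (by linarith) hd.le
      · exact div_nonneg (by linarith) hd.le
    have hw1 : ∑ i, w i = 1 := by
      simp [w, Fin.sum_univ_three]; field_simp; ring
    have hx : x = ∑ i, w i • V i := by
      ext j; fin_cases j <;> simp [w, V, Fin.sum_univ_three] <;> field_simp <;> ring
    exact hx ▸ (convex_convexHull ℚ _).sum_mem hw0 hw1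
      (fun i _ ↦ subset_convexHull ℚ _ (by fin_cases i <;> simp [V]))

theorem ncard_latticePts_apexTriangle {c1 c2 h : ℚ} (hc : c1 < c2) (hh : 0 ≤ h) :
    ({x | x ∈ apexTriangle c1 c2 h ∧ IsLatticePt x}.ncard : ℚ) =
      ∑ y ∈ range (⌊h⌋₊ + 1), ((⌊c2 * y⌋ : ℚ) - ⌈c1 * y⌉ + 1) := by
  classical
  set F := (range (⌊h⌋₊ + 1)).sigma fun y : ℕ ↦ Icc ⌈c1 * y⌉ ⌊c2 * y⌋
  set e : (Σ _ : ℕ, ℤ) → Fin 2 → ℚ := fun p ↦ ![p.2, p.1]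
  have he : e.Injective := by
    rintro ⟨y, z⟩ ⟨y', z'⟩ hyz
    have h0 := congrFun hyz 0
    have h1 := congrFun hyz 1
    simp only [e, Matrix.cons_val_zero, Matrix.cons_val_one, Int.cast_inj, Nat.cast_inj] at h0 h1
    subst h0 h1; rfl
  have hset : {x | x ∈ apexTriangle c1 c2 h ∧ IsLatticePt x} = F.image e := by
    ext x
    simp only [Set.mem_ofPred_eq, coe_image, Set.mem_image, mem_coe, F, mem_sigma, mem_range,
      mem_Icc, Nat.lt_succ_iff, Nat.le_floor_iff hh, Int.ceil_le, Int.le_floor,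
      mem_apexTriangle hc hh]
    constructor
    · rintro ⟨⟨h1, h2, h3, h4⟩, hx⟩
      obtain ⟨z, hz⟩ := hx 0
      obtain ⟨y, hy⟩ := hx 1
      lift y to ℕ using (by exact_mod_cast hy ▸ h1)
      refine ⟨⟨y, z⟩, ?_, ?_⟩
      · simp_all
      · ext i; fin_cases i <;> simp_all [e]
    · rintro ⟨⟨y, z⟩, ⟨hyh, hz1, hz2⟩, rfl⟩
      refine ⟨?_, fun i ↦ ?_⟩
      · simpa [e] using And.intro hyh (And.intro hz1 hz2)
      · fin_cases i
        exacts [⟨z, rfl⟩, ⟨y, rfl⟩]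
  rw [hset, Set.ncard_coe_finset, card_image_of_injective _ he, card_sigma, Nat.cast_sum]
  refine sum_congr rfl fun y _ ↦ ?_
  have hle : ⌈c1 * y⌉ ≤ ⌊c2 * y⌋ + 1 :=
    (Int.ceil_mono (by gcongr)).trans (Int.ceil_le_floor_add_one _)
  rw [← Int.cast_natCast, Int.card_Icc_of_le _ _ hle]
  push_cast; ring

/-- Row `y` of `apexTriangle c1 c2 h` contains `(c2 - c1) * y + rowExcess c1 c2 y` lattice points
(for `y ≤ h`). -/
def rowExcess (c1 c2 : ℚ) (y : ℕ) : ℚ :=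
  1 - Int.fract (c2 * y) - Int.fract (-(c1 * y))

theorem rowExcess_div (s1 s2 : ℤ) (t1 t2 : ℕ) (y : ℕ) :
    rowExcess (s1 / t1) (s2 / t2) y =
      1 - Int.fract ((s2 : ℚ) / t2 * y) - Int.fract (((-s1 : ℤ) : ℚ) / t1 * y) := by
  rw [rowExcess, Int.cast_neg, neg_div, neg_mul]

theorem periodic_rowExcess (s1 s2 : ℤ) (t1 t2 : ℕ) :
    Periodic (rowExcess (s1 / t1) (s2 / t2)) (t1 * t2) := by
  intro y
  have h1 := (periodic_fract_div_mul (-s1) t1).nat_mul t2 y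
  have h2 := (periodic_fract_div_mul s2 t2).nat_mul t1 y
  simp only [rowExcess_div, Nat.cast_id] at h1 h2 ⊢
  rw [mul_comm t2 t1] at h1
  rw [h1, h2]

theorem sum_rowExcess_range_mul {s1 s2 : ℤ} {t1 t2 : ℕ} (ht1 : 0 < t1) (ht2 : 0 < t2)
    (h1 : Int.gcd s1 t1 = 1) (h2 : Int.gcd s2 t2 = 1) :
    ∑ y ∈ range (t1 * t2), rowExcess (s1 / t1) (s2 / t2) y = ((t1 : ℚ) + t2) / 2 := by
  simp only [rowExcess_div, sum_sub_distrib, sum_const, card_range, nsmul_eq_mul, mul_one]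
  rw [sum_fract_div_mul_range_mul ht2 h2, mul_comm t1 t2,
    sum_fract_div_mul_range_mul ht1 (by rwa [Int.neg_gcd])]
  push_cast; ring

theorem latticeCount_Tri {a b : ℕ} {s1 s2 : ℤ} {t1 t2 : ℕ} (hslope : (s1 : ℚ) / t1 < s2 / t2)
    {r : ℚ} (hr : 0 ≤ r) :
    (latticeCount (Tri a b s1 s2 t1 t2) r : ℚ) =
      ((s2 : ℚ) / t2 - s1 / t1) * ⌊a * r / b⌋₊ * (⌊a * r / b⌋₊ + 1) / 2 +
        ∑ y ∈ range (⌊a * r / b⌋₊ + 1), rowExcess (s1 / t1) (s2 / t2) y := by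
  rw [latticeCount, smul_Tri, ncard_latticePts_apexTriangle hslope (by positivity)]
  simp only [floor_sub_ceil_add_one, rowExcess, sum_add_distrib, ← sub_mul, ← mul_sum]
  have hgauss := sum_range_natCast_mul_two (K := ℚ) (⌊a * r / b⌋₊ + 1)
  push_cast at hgauss
  linear_combination ((s2 : ℚ) / t2 - s1 / t1) / 2 * hgauss

theorem latticeCount_Tri_add_nat_mul {a b : ℕ} {s1 s2 : ℤ} {t1 t2 : ℕ} (hb : 0 < b)
    (ht1 : 0 < t1) (ht2 : 0 < t2) (hslope : (s1 : ℚ) / t1 < s2 / t2)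
    (h1 : Int.gcd s1 t1 = 1) (h2 : Int.gcd s2 t2 = 1) {r : ℚ} (hr : 0 ≤ r) (m n : ℕ) :
    (latticeCount (Tri a b s1 s2 t1 t2) (r + n * (b * t1 * t2 * m : ℕ)) : ℚ) =
      ((s2 : ℚ) / t2 - s1 / t1) * (⌊a * r / b⌋₊ + n * (a * t1 * t2 * m : ℕ)) *
          (⌊a * r / b⌋₊ + n * (a * t1 * t2 * m : ℕ) + 1) / 2 +
        ∑ y ∈ range (⌊a * r / b⌋₊ + 1), rowExcess (s1 / t1) (s2 / t2) y +
        n * (a * m) * ((t1 + t2) / 2) := by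
  have hfloor :
      ⌊a * (r + n * (b * t1 * t2 * m : ℕ)) / b⌋₊ = ⌊a * r / b⌋₊ + n * (a * t1 * t2 * m) := by
    rw [← Nat.floor_add_natCast (by positivity)]
    congr 1
    push_cast
    field_simp
  rw [latticeCount_Tri hslope (by positivity), hfloor,
    show ⌊a * r / b⌋₊ + n * (a * t1 * t2 * m) + 1 = ⌊a * r / b⌋₊ + 1 + n * a * m * (t1 * t2) by
      ring,
    (periodic_rowExcess s1 s2 t1 t2).sum_range_add_mul_period,
    sum_rowExcess_range_mul ht1 ht2 h1 h2]
  push_cast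
  ring

theorem stmt10_general (a b t1 t2 : ℕ) (s1 s2 : ℤ) (hb : 0 < b)
    (ht1 : 0 < t1) (ht2 : 0 < t2) (hslope : (s1 : ℚ) / t1 < (s2 : ℚ) / t2)
    (h1 : Int.gcd s1 (t1 : ℤ) = 1) (h2 : Int.gcd s2 (t2 : ℤ) = 1)
    (Q : ℕ → ℚ → ℚ) (hQ : IsRatEhrhartCoeffs (Tri a b s1 s2 t1 t2) 2 Q) :
    ∀ r : ℚ, 0 ≤ r →
      Q 1 r = ((a : ℚ) / b) * (((t1 : ℚ) + t2) / (2 * t1 * t2) -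
        (Int.fract ((a : ℚ) * r / b) - 1 / 2) * ((s2 : ℚ) / t2 - (s1 : ℚ) / t1)) := by
  intro r hr
  obtain ⟨m, hm, hper⟩ := hQ.exists_nat_period
  set c : ℚ := s2 / t2 - s1 / t1
  set N := ⌊a * r / b⌋₊
  set G := ∑ y ∈ range (N + 1), rowExcess (s1 / t1) (s2 / t2) y
  set M := a * t1 * t2 * m
  set P := b * t1 * t2 * m
  have hP : (P : ℚ) ≠ 0 := by positivity
  have hcoeff := linear_coeff_eq_of_quadratic_eq (α := c * N * (N + 1) / 2 + G)
    (β := c * M * (2 * N + 1) / 2 + a * m * ((t1 + t2) / 2)) (γ := c * M ^ 2 / 2)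
    (A := Q 0 r) (B := Q 1 r) (C := Q 2 r) (r := r) hP fun n _ ↦ by
      have hT := latticeCount_Tri_add_nat_mul (a := a) hb ht1 ht2 hslope h1 h2 hr m n
      have hE := hQ.latticeCount_add_nat_mul (Nat.cast_nonneg P)
        (fun i hi ↦ by simpa [P] using (hper i hi).nat_mul (b * t1 * t2)) hr n
      simp only [sum_range_succ, sum_range_zero, zero_add, pow_zero, pow_one, mul_one] at hE
      linear_combination hE - hT
  rw [hcoeff, Int.fract, ← Int.natCast_floor_eq_floor (by positivity)]
  simp only [M, P]
  push_cast
  field_simp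
  ring

/-- the linear coefficient of the rational Ehrhart quasi-polynomial of
the triangle `T` is
`Q₁(T,r) = (a/b)((t₁+t₂)/(2t₁t₂) - ({ar/b} - 1/2)(s₂/t₂ - s₁/t₁))`. -/
theorem stmt10 (a b t1 t2 : ℕ) (s1 s2 : ℤ) (ha : 0 < a) (hb : 0 < b)
    (ht1 : 0 < t1) (ht2 : 0 < t2) (hslope : (s1 : ℚ) / t1 < (s2 : ℚ) / t2)
    (hab : Nat.Coprime a b) (h1 : Int.gcd s1 (t1 : ℤ) = 1) (h2 : Int.gcd s2 (t2 : ℤ) = 1)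
    (Q : ℕ → ℚ → ℚ) (hQ : IsRatEhrhartCoeffs (Tri a b s1 s2 t1 t2) 2 Q) :
    ∀ r : ℚ, 0 ≤ r →
      Q 1 r = ((a : ℚ) / b) * (((t1 : ℚ) + t2) / (2 * t1 * t2) -
        (Int.fract ((a : ℚ) * r / b) - 1 / 2) * ((s2 : ℚ) / t2 - (s1 : ℚ) / t1)) :=
  stmt10_general a b t1 t2 s1 s2 hb ht1 ht2 hslope h1 h2 Q hQ
end

section
/- For the triangle T_α = conv((0,0), ((α-1)/α, 1), ((α+1)/α, 1)) with α a positive integer, the constant coefficient of the rational Ehrhart quasi-polynomial satisfies Q_0(T_α, mα + k + r̃) = (1/α)(k(α - k - 2) + r̃^2 - 2r̃) + 1 for all integers m >= 0, integers 0 <= k < α and rationals 0 <= r̃ < 1. Consequently, sup_r Q_0(T_α, r) / Q_0(T_α, 0) → ∞ as α → ∞, so no bound |Q_0(P,r)| <= C·Q_0(P,0) with absolute constant C can hold for all rational polygons P. -/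
open Pointwise

/-- The triangle `T_α = conv((0,0), ((α-1)/α, 1), ((α+1)/α, 1))`. -/
def Talpha (α : ℕ) : Set (Fin 2 → ℚ) :=
  convexHull ℚ {![0, 0], ![((α : ℚ) - 1) / α, 1], ![((α : ℚ) + 1) / α, 1]}

/-!
In `r • T_α` the lattice points at height `b ∈ {0, …, ⌊r⌋}` are the integers `a` with
`α |a - b| ≤ b`, i.e. `|a - b| ≤ ⌊b / α⌋`. Summing `2 ⌊b / α⌋ + 1` over `b` with
`⌊r⌋ = α q + s`, `0 ≤ s < α`, gives `α q² + (s + 1)(2q + 1)`, and substituting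
`q = (r - s - {r}) / α` exhibits an explicit quasi-polynomial of period `α` with the stated
constant term. The coefficients of a rational Ehrhart quasi-polynomial are unique, because along
a common period they are the coefficients of a polynomial with infinitely many prescribed values.
For `α = 2t + 2` this gives `Q₀(T_α, t) = t² / α + 1`, unbounded in `t`, while `Q₀(T_α, 0) = 1`.
-/

open Finset Polynomial

theorem exists_nat_common_multiple (s : Finset ℚ) (hs : ∀ p ∈ s, 0 < p) :
    ∃ L : ℕ, 0 < L ∧ ∀ p ∈ s, ∃ n : ℕ, (L : ℚ) = n * p := by
  induction s using Finset.induction_on with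
  | empty => exact ⟨1, one_pos, by simp⟩
  | insert a s _ ih =>
    obtain ⟨L, hL, hLs⟩ := ih fun p hp => hs p (mem_insert_of_mem hp)
    have ha : 0 < a.num := Rat.num_pos.mpr (hs a (mem_insert_self a s))
    have hnum : ((a.num.toNat : ℕ) : ℚ) = a.den * a := by
      rw [← Int.cast_natCast, Int.toNat_of_nonneg ha.le, mul_comm, Rat.mul_den_eq_num]
    refine ⟨L * a.num.toNat, Nat.mul_pos hL (by omega), fun p hp => ?_⟩
    rcases mem_insert.mp hp with rfl | hp
    · exact ⟨L * p.den, by push_cast; rw [hnum]; ring⟩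
    · obtain ⟨n, hn⟩ := hLs p hp
      exact ⟨n * a.num.toNat, by push_cast; rw [hn]; ring⟩

/-- Along a common period `L` of all the coefficients, the numbers `Q i r - Q' i r` are the
coefficients of a polynomial vanishing at the infinitely many points `r + m L`. -/
theorem IsRatEhrhartCoeffs.unique {n d : ℕ} {P : Set (Fin n → ℚ)} {Q Q' : ℕ → ℚ → ℚ}
    (hQ : IsRatEhrhartCoeffs P d Q) (hQ' : IsRatEhrhartCoeffs P d Q') {i : ℕ} (hi : i ≤ d)
    (r : ℚ) : Q i r = Q' i r := by
  choose p hp hper using hQ.1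
  choose p' hp' hper' using hQ'.1
  obtain ⟨L, hL, hLp⟩ := exists_nat_common_multiple ((range (d + 1)).image p ∪
    (range (d + 1)).image p') (by
      simp only [mem_union, mem_image]
      rintro _ (⟨j, -, rfl⟩ | ⟨j, -, rfl⟩)
      exacts [hp j, hp' j])
  have hperL : ∀ j ∈ range (d + 1), ∀ m : ℕ,
      Q j (r + m * L) = Q j r ∧ Q' j (r + m * L) = Q' j r := by
    intro j hj m
    obtain ⟨a, ha⟩ := hLp (p j) (mem_union_left _ (mem_image_of_mem p hj))
    obtain ⟨b, hb⟩ := hLp (p' j) (mem_union_right _ (mem_image_of_mem p' hj))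
    constructor
    · rw [ha, ← mul_assoc, ← Nat.cast_mul]; exact Function.Periodic.nat_mul (hper j) _ r
    · rw [hb, ← mul_assoc, ← Nat.cast_mul]; exact Function.Periodic.nat_mul (hper' j) _ r
  set F : ℚ[X] := ∑ j ∈ range (d + 1), C (Q j r - Q' j r) * X ^ j
  set M := ⌈-r⌉₊
  have hroot : ∀ m : ℕ, F.IsRoot (r + (m + M : ℕ) * L) := by
    intro m
    have ht : 0 ≤ r + (m + M : ℕ) * L := by
      have : (M : ℚ) ≤ (m + M : ℕ) * L := by
        exact_mod_cast le_mul_of_le_of_one_le (Nat.le_add_left M m) hL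
      linarith [Nat.le_ceil (-r)]
    simp only [IsRoot, F, eval_finsetSum, eval_mul, eval_C, eval_pow, eval_X, sub_mul,
      sum_sub_distrib, sub_eq_zero]
    calc ∑ j ∈ range (d + 1), Q j r * (r + (m + M : ℕ) * L) ^ j
        = ∑ j ∈ range (d + 1), Q j (r + (m + M : ℕ) * L) * (r + (m + M : ℕ) * L) ^ j :=
          sum_congr rfl fun j hj => by rw [(hperL j hj _).1]
      _ = ∑ j ∈ range (d + 1), Q' j (r + (m + M : ℕ) * L) * (r + (m + M : ℕ) * L) ^ j := by
          rw [← hQ.2 _ ht, ← hQ'.2 _ ht]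
      _ = ∑ j ∈ range (d + 1), Q' j r * (r + (m + M : ℕ) * L) ^ j :=
          sum_congr rfl fun j hj => by rw [(hperL j hj _).2]
  have hF : F = 0 := eq_zero_of_infinite_isRoot F <|
    Set.infinite_of_injective_forall_mem (fun a b h => by simpa [hL.ne'] using h) hroot
  have := congrArg (coeff · i) hF
  simp only [F, finsetSum_coeff, coeff_C_mul_X_pow, sum_ite_eq, mem_range, coeff_zero] at this
  simpa [Nat.lt_succ_of_le hi, sub_eq_zero] using this

theorem mem_smul_Talpha {α : ℕ} (hα : 0 < α) {r : ℚ} (hr : 0 ≤ r) (x : Fin 2 → ℚ) :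
    x ∈ r • Talpha α ↔ |α * (x 0 - x 1)| ≤ x 1 ∧ x 1 ≤ r := by
  have hα' : (0 : ℚ) < α := by exact_mod_cast hα
  rw [Talpha, ← convexHull_smul, Set.smul_set_insert, Set.smul_set_insert, Set.smul_set_singleton,
    ← convexJoin_singleton_segment, mem_convexJoin]
  simp only [Set.mem_singleton_iff, exists_eq_left, segment, Set.mem_ofPred_eq]
  constructor
  · rintro ⟨_, ⟨a, b, ha, hb, hab, rfl⟩, c, d, hc, hd, hcd, rfl⟩
    have hab' : a * r + b * r = r := by linear_combination r * hab
    have e : (α : ℚ) * (d * (a * (r * ((α - 1) / α)) + b * (r * ((α + 1) / α))) - d * r)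
        = d * r * (b - a) := by field_simp; linear_combination d * r * α * hab
    have hba : |b - a| ≤ 1 := abs_sub_le_iff.mpr ⟨by linarith, by linarith⟩
    simp only [Matrix.smul_cons, smul_eq_mul, mul_zero, Matrix.smul_empty, mul_one, Matrix.add_cons,
      Matrix.head_cons, Matrix.tail_cons, hab', Matrix.empty_add_empty, Pi.add_apply,
      Matrix.cons_val_zero, zero_add, Matrix.cons_val_one, e, abs_mul, abs_of_nonneg hd,
      abs_of_nonneg hr]
    exact ⟨mul_le_of_le_one_right (by positivity) hba, mul_le_of_le_one_left hr (by linarith)⟩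
  · rintro ⟨hx, hxr⟩
    have hx1 : 0 ≤ x 1 := (abs_nonneg _).trans hx
    rcases hx1.eq_or_lt with hx1 | hx1
    · have hx0 : x 0 = 0 := by
        rw [← hx1, abs_nonpos_iff, mul_eq_zero] at hx; simpa using hx.resolve_left hα'.ne'
      refine ⟨_, ⟨1, 0, zero_le_one, le_rfl, add_zero 1, rfl⟩,
        1, 0, zero_le_one, le_rfl, add_zero 1, ?_⟩
      ext i; fin_cases i <;> simp [hx0, ← hx1]
    · have hr' : 0 < r := hx1.trans_le hxr
      obtain ⟨hl, hu⟩ := abs_le.mp hx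
      refine ⟨_, ⟨(x 1 - α * (x 0 - x 1)) / (2 * x 1), (x 1 + α * (x 0 - x 1)) / (2 * x 1),
        div_nonneg (by linarith) (by linarith), div_nonneg (by linarith) (by linarith),
        by field_simp; ring, rfl⟩,
        1 - x 1 / r, x 1 / r, sub_nonneg.mpr (div_le_one_of_le₀ hxr hr'.le), by positivity,
        sub_add_cancel 1 _, ?_⟩
      ext i; fin_cases i <;> simp <;> field_simp <;> ring

theorem Int.abs_mul_sub_le_iff_mem_Icc {α : ℤ} (hα : 0 < α) (a b : ℤ) :
    |α * (a - b)| ≤ b ↔ a ∈ Icc (b - b / α) (b + b / α) := by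
  rw [abs_mul, abs_of_pos hα, mul_comm, ← Int.le_ediv_iff_mul_le hα, abs_sub_le_iff, mem_Icc]
  omega

theorem latticePts_smul_Talpha {α : ℕ} (hα : 0 < α) {r : ℚ} (hr : 0 ≤ r) :
    {x | x ∈ r • Talpha α ∧ IsLatticePt x} =
      (fun p : (_ : ℕ) × ℤ => ![(p.2 : ℚ), p.1]) ''
        ↑((range (⌊r⌋₊ + 1)).sigma fun b => Icc ((b : ℤ) - (b / α : ℕ)) (b + (b / α : ℕ))) := by
  have hαZ : (0 : ℤ) < α := by exact_mod_cast hα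
  ext x
  simp only [Set.mem_ofPred_eq, mem_smul_Talpha hα hr, Set.mem_image, mem_coe, mem_sigma,
    mem_range, Nat.lt_succ_iff, Sigma.exists, Int.natCast_ediv,
    ← Int.abs_mul_sub_le_iff_mem_Icc hαZ]
  constructor
  · rintro ⟨⟨hx, hxr⟩, hlat⟩
    obtain ⟨a, ha⟩ := hlat 0
    obtain ⟨b, hb⟩ := hlat 1
    lift b to ℕ using by exact_mod_cast hb ▸ (abs_nonneg _).trans hx
    refine ⟨b, a, ⟨Nat.le_floor (by exact_mod_cast hb ▸ hxr), ?_⟩, ?_⟩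
    · rw [ha, hb] at hx; exact_mod_cast hx
    · ext i; fin_cases i <;> simp [ha, hb]
  · rintro ⟨b, a, ⟨hb, hab⟩, rfl⟩
    refine ⟨⟨by simp only [Matrix.cons_val_zero, Matrix.cons_val_one]; exact_mod_cast hab,
      (Nat.cast_le.mpr hb).trans (Nat.floor_le hr)⟩, ?_⟩
    intro i; fin_cases i
    exacts [⟨a, rfl⟩, ⟨b, rfl⟩]

theorem sum_range_two_mul_div_add_one {α : ℕ} (q : ℕ) {t : ℕ} (ht : t ≤ α) :
    ∑ b ∈ range (α * q + t), (2 * (b / α) + 1) = α * q ^ 2 + t * (2 * q + 1) := by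
  have hblock : ∀ q t, t ≤ α → ∑ k ∈ range t, (2 * ((α * q + k) / α) + 1) = t * (2 * q + 1) := by
    intro q t ht
    rw [sum_congr rfl fun k hk => by
      have hkα : k < α := (mem_range.mp hk).trans_le ht
      rw [Nat.mul_add_div (by omega) q, Nat.div_eq_of_lt hkα, add_zero],
      sum_const, card_range, smul_eq_mul]
  induction q generalizing t with
  | zero => simpa using hblock 0 t ht
  | succ q ih =>
    rw [sum_range_add, hblock _ _ ht, mul_add_one, ih le_rfl]
    ring

theorem latticeCount_Talpha {α : ℕ} (hα : 0 < α) {r : ℚ} (hr : 0 ≤ r) :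
    latticeCount (Talpha α) r = α * (⌊r⌋₊ / α) ^ 2 + (⌊r⌋₊ % α + 1) * (2 * (⌊r⌋₊ / α) + 1) := by
  rw [latticeCount, latticePts_smul_Talpha hα hr, Set.ncard_image_of_injective,
    Set.ncard_coe_finset, card_sigma]
  · have hsplit : ⌊r⌋₊ + 1 = α * (⌊r⌋₊ / α) + (⌊r⌋₊ % α + 1) := by rw [← add_assoc, Nat.div_add_mod]
    rw [← sum_range_two_mul_div_add_one _ (Nat.mod_lt _ hα), ← hsplit]
    refine sum_congr rfl fun b _ => ?_
    rw [Int.card_Icc]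
    omega
  · rintro ⟨b, a⟩ ⟨b', a'⟩ h
    have h0 := congrFun h 0
    have h1 := congrFun h 1
    simp only [Matrix.cons_val_zero, Matrix.cons_val_one, Int.cast_inj, Nat.cast_inj] at h0 h1
    subst h0 h1
    rfl

/-- Read off from `latticeCount_Talpha` by substituting `⌊r⌋₊ = α q + s` with `s < α`, and
`q = (r - s - Int.fract r) / α`. -/
def talphaEhrhartCoeff (α : ℕ) : ℕ → ℚ → ℚ
  | 0, r =>
    (((⌊r⌋ % α : ℤ) : ℚ) * (α - (⌊r⌋ % α : ℤ) - 2) + Int.fract r ^ 2 - 2 * Int.fract r) / α + 1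
  | 1, r => 2 * (1 - Int.fract r) / α
  | 2, _ => 1 / α
  | _ + 3, _ => 0

theorem talphaEhrhartCoeff_periodic (α i : ℕ) : Function.Periodic (talphaEhrhartCoeff α i) α := by
  intro r
  match i with
  | 0 =>
    simp only [talphaEhrhartCoeff, Int.floor_add_natCast, Int.fract_add_natCast, Int.add_emod_right]
  | 1 => simp only [talphaEhrhartCoeff, Int.fract_add_natCast]
  | 2 | _ + 3 => rfl

theorem isRatEhrhartCoeffs_Talpha {α : ℕ} (hα : 0 < α) :
    IsRatEhrhartCoeffs (Talpha α) 2 (talphaEhrhartCoeff α) := by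
  refine ⟨fun i => ⟨α, by exact_mod_cast hα, talphaEhrhartCoeff_periodic α i⟩, fun r hr => ?_⟩
  have hfloor : ((⌊r⌋₊ : ℤ) : ℚ) + Int.fract r = r := by
    rw [Int.natCast_floor_eq_floor hr, Int.floor_add_fract]
  have hmod : ⌊r⌋ % α = (⌊r⌋₊ % α : ℕ) := by
    rw [← Int.natCast_floor_eq_floor hr, Int.natCast_mod]
  have hαQ : (α : ℚ) ≠ 0 := by exact_mod_cast hα.ne'
  simp only [latticeCount_Talpha hα hr, sum_range_succ, range_zero, sum_empty, talphaEhrhartCoeff,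
    hmod]
  have hN := Nat.div_add_mod ⌊r⌋₊ α
  -- so that the rewrites below only touch the bare occurrences of `r` and `⌊r⌋₊`
  set f := Int.fract r
  set q := ⌊r⌋₊ / α
  set s := ⌊r⌋₊ % α
  rw [← hfloor, ← hN]
  push_cast
  field_simp
  ring

theorem talphaEhrhartCoeff_zero_apply {α : ℕ} (m : ℕ) {k : ℕ} (hk : k < α) {rt : ℚ} (h0 : 0 ≤ rt)
    (h1 : rt < 1) :
    talphaEhrhartCoeff α 0 (m * α + k + rt) =
      1 / (α : ℚ) * (k * (α - k - 2) + rt ^ 2 - 2 * rt) + 1 := by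
  have hsplit : (m : ℚ) * α + k + rt = ((m * α + k : ℕ) : ℤ) + rt := by push_cast; ring
  have hfloor : ⌊(m : ℚ) * α + k + rt⌋ = ((m * α + k : ℕ) : ℤ) := by
    rw [hsplit, Int.floor_intCast_add, Int.floor_eq_zero_iff.mpr ⟨h0, h1⟩, add_zero]
  have hfract : Int.fract ((m : ℚ) * α + k + rt) = rt := by
    rw [hsplit, Int.fract_intCast_add, Int.fract_eq_self.mpr ⟨h0, h1⟩]
  have hmod : ((m * α + k : ℕ) : ℤ) % α = k := by
    rw [← Int.natCast_mod, Nat.mul_add_mod_self_right, Nat.mod_eq_of_lt hk]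
  rw [talphaEhrhartCoeff, hfloor, hfract, hmod, Int.cast_natCast]
  ring

theorem ratEhrhartCoeff_zero_Talpha {α : ℕ} (hα : 0 < α) {Q : ℕ → ℚ → ℚ}
    (hQ : IsRatEhrhartCoeffs (Talpha α) 2 Q) (m : ℕ) {k : ℕ} (hk : k < α) {rt : ℚ} (h0 : 0 ≤ rt)
    (h1 : rt < 1) :
    Q 0 (m * α + k + rt) = 1 / (α : ℚ) * (k * (α - k - 2) + rt ^ 2 - 2 * rt) + 1 := by
  rw [hQ.unique (isRatEhrhartCoeffs_Talpha hα) (Nat.zero_le 2),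
    talphaEhrhartCoeff_zero_apply m hk h0 h1]

/-- explicit formula for `Q₀(T_α, mα + k + r̃)`, and consequently the
constant coefficient of rational Ehrhart quasi-polynomials of rational polygons is
not bounded by any absolute constant multiple of its value at `0`. -/
theorem stmt16 :
    (∀ α : ℕ, 0 < α → ∀ Q : ℕ → ℚ → ℚ, IsRatEhrhartCoeffs (Talpha α) 2 Q →
      ∀ m k : ℕ, k < α → ∀ rt : ℚ, 0 ≤ rt → rt < 1 →
        Q 0 ((m : ℚ) * α + k + rt) =
          (1 / (α : ℚ)) * ((k : ℚ) * ((α : ℚ) - k - 2) + rt ^ 2 - 2 * rt) + 1) ∧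
    (∀ C : ℚ, ∃ α : ℕ, 0 < α ∧
      ∀ Q : ℕ → ℚ → ℚ, IsRatEhrhartCoeffs (Talpha α) 2 Q →
        ∃ r : ℚ, 0 ≤ r ∧ Q 0 r > C * Q 0 0) := by
  refine ⟨fun α hα Q hQ m k hk rt h0 h1 => ratEhrhartCoeff_zero_Talpha hα hQ m hk h0 h1,
    fun C => ?_⟩
  -- `Q₀(T_α, t) = t² / α + 1 ≥ t / 4 + 1` for `α = 2t + 2`, so `t > 4C` suffices.
  set t := ⌈4 * C⌉₊ + 1
  have hCt : 4 * C < t := (Nat.le_ceil _).trans_lt (by exact_mod_cast Nat.lt_succ_self _)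
  have ht1 : (1 : ℚ) ≤ t := by exact_mod_cast Nat.le_add_left 1 _
  refine ⟨2 * t + 2, by omega, fun Q hQ => ⟨t, t.cast_nonneg, ?_⟩⟩
  have hQ0 := ratEhrhartCoeff_zero_Talpha (by omega) hQ 0 (k := 0) (by omega) le_rfl one_pos
  have hQt := ratEhrhartCoeff_zero_Talpha (by omega) hQ 0 (k := t) (by omega) le_rfl one_pos
  norm_num at hQ0 hQt
  rw [hQ0, hQt, mul_one, gt_iff_lt]
  field_simp
  nlinarith
end

section
/- Let P ⊂ R^n be an n-dimensional rational polytope with 0 ∈ P. Then the minimal periods of the coefficient functions Q_i(P,·) are weakly decreasing in i: if d is a period of Q_i(P,·) then d is a period of Q_{i+1}(P,·), for i = 0,...,n-1. -/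
open Pointwise

/-!
Because `0 ∈ P` and `P` is closed, the count `#(rP ∩ ℤⁿ)` is constant on some interval
`[r, r + ε)`. Over `ℚ` closedness is not a compactness statement; it comes from Carathéodory:
for the hull of an affinely independent set, the barycentric coordinates of `t • y` are affine
in `t`, so the admissible `t` form a closed set.

Let `p` be a common period of the `Q_j` and `G_r = ∑_j Q_j(r) Xʲ`. Evaluating the
quasi-polynomial identity at the `m + 1` points `r + kp + s` shows that the Taylor shift of
`G_{r+s}` by `s` interpolates the same values as `G_r`, hence equals it. So on `[r, r + ε)`,
`Q_j(r + s)` is the polynomial `s ↦ (D^{(j)} G_r)(-s)` (Hasse derivative), whose linear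
coefficient is `-(j+1) Q_{j+1}(r)`: a discrete form of `Q_j' = -(j+1) Q_{j+1}`. If `d` is a
period of `Q_i`, the polynomials describing `Q_i` near `r` and near `r + d` coincide, and
comparing linear coefficients gives `Q_{i+1}(r) = Q_{i+1}(r + d)`.
-/

open Polynomial Filter Topology

section ConvexHull

variable {𝕜 E : Type*} [Field 𝕜] [LinearOrder 𝕜] [IsStrictOrderedRing 𝕜] [AddCommGroup E]
  [Module 𝕜 E]

theorem Convex.smul_set_subset_smul_set {P : Set E} (hP : Convex 𝕜 P) (h0 : (0 : E) ∈ P)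
    {s t : 𝕜} (hs : 0 < s) (hst : s ≤ t) : s • P ⊆ t • P := by
  rintro _ ⟨y, hy, rfl⟩
  rw [Set.mem_smul_set_iff_inv_smul_mem₀ (hs.trans_le hst).ne', smul_smul, inv_mul_eq_div]
  have ht : 0 ≤ t := hs.le.trans hst
  exact hP.smul_mem_of_zero_mem h0 hy ⟨div_nonneg hs.le ht, div_le_one_of_le₀ hst ht⟩

variable [TopologicalSpace 𝕜] [OrderTopology 𝕜] [IsTopologicalRing 𝕜]

theorem isClosed_setOf_smul_mem_convexHull_of_affineIndependent {K : Finset E}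
    (hK : AffineIndependent 𝕜 ((↑) : K → E)) (y : E) :
    IsClosed {t : 𝕜 | t • y ∈ convexHull 𝕜 (K : Set E)} := by
  rcases Set.subsingleton_or_nontrivial {t : 𝕜 | t • y ∈ convexHull 𝕜 (K : Set E)}
    with hS | ⟨t₁, ht₁, t₂, ht₂, hne⟩
  · exact hS.isClosed
  obtain ⟨a, -, ha₁, ha⟩ := Finset.mem_convexHull'.1 ht₁
  obtain ⟨b, -, hb₁, hb⟩ := Finset.mem_convexHull'.1 ht₂
  -- interpolating the weights of `t₁ • y` and `t₂ • y` gives weights of `t • y` for every `t`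
  set w : 𝕜 → E → 𝕜 := fun t x => a x + (t - t₁) / (t₂ - t₁) * (b x - a x) with hw
  have hw₁ (t : 𝕜) : ∑ x ∈ K, w t x = 1 := by
    simp only [hw, Finset.sum_add_distrib, ← Finset.mul_sum, Finset.sum_sub_distrib, ha₁, hb₁,
      sub_self, mul_zero, add_zero]
  have hwy (t : 𝕜) : ∑ x ∈ K, w t x • x = t • y := by
    have hsub : t₂ - t₁ ≠ 0 := sub_ne_zero.2 hne.symm
    calc ∑ x ∈ K, w t x • x
        = ∑ x ∈ K, (a x • x + ((t - t₁) / (t₂ - t₁)) • (b x • x - a x • x)) := by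
          simp only [hw, add_smul, mul_smul, sub_smul, smul_sub]
      _ = t₁ • y + ((t - t₁) / (t₂ - t₁)) • (t₂ • y - t₁ • y) := by
          rw [Finset.sum_add_distrib, ← Finset.smul_sum, Finset.sum_sub_distrib, ha, hb]
      _ = t • y := by
          rw [← sub_smul, smul_smul, ← add_smul, div_mul_cancel₀ _ hsub, add_sub_cancel]
  have hS : {t : 𝕜 | t • y ∈ convexHull 𝕜 (K : Set E)} = ⋂ x ∈ K, {t | 0 ≤ w t x} := by
    ext t
    simp only [Set.mem_ofPred_eq, Set.mem_iInter]
    constructor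
    · intro ht x hx
      obtain ⟨c, hc₀, hc₁, hc⟩ := Finset.mem_convexHull'.1 ht
      rw [← hK.eq_of_sum_eq_sum_subtype (hc₁.trans (hw₁ t).symm) (hc.trans (hwy t).symm) x hx]
      exact hc₀ x hx
    · exact fun ht => Finset.mem_convexHull'.2 ⟨w t, ht, hw₁ t, hwy t⟩
  rw [hS]
  exact isClosed_biInter fun x _ => isClosed_le continuous_const (by fun_prop)

theorem isClosed_setOf_smul_mem_convexHull (V : Finset E) (y : E) :
    IsClosed {t : 𝕜 | t • y ∈ convexHull 𝕜 (V : Set E)} := by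
  have hfin : {K : Finset E | (K : Set E) ⊆ V ∧ AffineIndependent 𝕜 ((↑) : K → E)}.Finite :=
    V.powerset.finite_toSet.subset fun K hK => Finset.mem_powerset.2 (Finset.coe_subset.1 hK.1)
  convert hfin.isClosed_biUnion fun K hK =>
    isClosed_setOf_smul_mem_convexHull_of_affineIndependent hK.2 y using 1
  ext t
  rw [Set.mem_ofPred_eq, convexHull_eq_union]
  simp only [Set.mem_iUnion, Set.mem_ofPred_eq, exists_prop, and_assoc]

theorem mem_smul_convexHull_of_forall_lt [DenselyOrdered 𝕜] {V : Finset E} {x : E} {r : 𝕜}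
    (hr : 0 < r) (h : ∀ s, r < s → x ∈ s • convexHull 𝕜 (V : Set E)) :
    x ∈ r • convexHull 𝕜 (V : Set E) := by
  rw [Set.mem_smul_set_iff_inv_smul_mem₀ hr.ne']
  have hsub : Set.Ioo 0 r⁻¹ ⊆ {t : 𝕜 | t • x ∈ convexHull 𝕜 (V : Set E)} := fun t ht => by
    have := h t⁻¹ ((lt_inv_comm₀ ht.1 hr).1 ht.2)
    rwa [Set.mem_smul_set_iff_inv_smul_mem₀ (inv_ne_zero ht.1.ne'), inv_inv] at this
  have hcl := (isClosed_setOf_smul_mem_convexHull (𝕜 := 𝕜) V x).closure_subset_iff.2 hsub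
  rw [closure_Ioo (inv_pos.2 hr).ne] at hcl
  exact hcl ⟨(inv_pos.2 hr).le, le_rfl⟩

end ConvexHull

section LatticePoints

variable {n : ℕ}

theorem IsRatPolytope.exists_forall_abs_le {P : Set (Fin n → ℚ)} (hP : IsRatPolytope P) :
    ∃ M : ℚ, ∀ x ∈ P, ∀ i, |x i| ≤ M := by
  obtain ⟨V, rfl⟩ := hP
  obtain ⟨M, hM⟩ := ((V.finite_toSet.prod (Set.finite_univ (α := Fin n))).image
    fun p : (Fin n → ℚ) × Fin n => |p.1 p.2|).bddAbove
  have hbox : convexHull ℚ (V : Set (Fin n → ℚ)) ⊆ Set.univ.pi fun _ => Set.Icc (-M) M :=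
    convexHull_min (fun v hv i _ => abs_le.1 (hM ⟨(v, i), ⟨hv, trivial⟩, rfl⟩))
      (convex_pi fun _ _ => convex_Icc _ _)
  exact ⟨M, fun x hx i => abs_le.2 (hbox hx i (Set.mem_univ i))⟩

theorem finite_setOf_mem_smul_isLatticePt {P : Set (Fin n → ℚ)} {M : ℚ}
    (hM : ∀ x ∈ P, ∀ i, |x i| ≤ M) (r : ℚ) : {x | x ∈ r • P ∧ IsLatticePt x}.Finite := by
  set B : ℤ := ⌈|r| * M⌉
  refine ((Set.Finite.pi fun _ => Set.finite_Icc (-B) B).image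
    fun (z : Fin n → ℤ) i => (z i : ℚ)).subset ?_
  rintro _ ⟨⟨y, hy, rfl⟩, hlat⟩
  choose z hz using hlat
  refine ⟨z, fun i _ => ?_, funext fun i => (hz i).symm⟩
  have hzi : |(z i : ℚ)| ≤ B := by
    simp only [← hz i, Pi.smul_apply, smul_eq_mul, abs_mul]
    exact (mul_le_mul_of_nonneg_left (hM y hy i) (abs_nonneg r)).trans (Int.le_ceil _)
  exact abs_le.1 (by exact_mod_cast hzi)

theorem eventually_latticeCount_add_eq {P : Set (Fin n → ℚ)} (hP : IsRatPolytope P)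
    (h0 : (0 : Fin n → ℚ) ∈ P) {r : ℚ} (hr : 0 < r) :
    ∀ᶠ s in 𝓝[≥] 0, latticeCount P (r + s) = latticeCount P r := by
  obtain ⟨M, hM⟩ := hP.exists_forall_abs_le
  obtain ⟨V, hV⟩ := hP
  have hmono {s t : ℚ} (hs : 0 < s) (hst : s ≤ t) : s • P ⊆ t • P :=
    (hV ▸ convex_convexHull ℚ _ : Convex ℚ P).smul_set_subset_smul_set h0 hs hst
  -- the lattice points that can enter `(r + s) • P` for `s < 1`: finitely many, and each one
  -- stays out for small `s` by closedness
  set T := {x | x ∈ (r + 1) • P ∧ IsLatticePt x} \ r • P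
  have hfar : ∀ x ∈ T, ∀ᶠ s in 𝓝[≥] 0, x ∉ (r + s) • P := by
    intro x hx
    obtain ⟨s₀, hs₀, hxs₀⟩ : ∃ s₀ > 0, x ∉ (r + s₀) • P := by
      by_contra! h
      rw [hV] at h
      have hxr : x ∉ r • convexHull ℚ (V : Set (Fin n → ℚ)) := hV ▸ hx.2
      exact hxr <| mem_smul_convexHull_of_forall_lt hr fun s hs => by
        simpa using h (s - r) (sub_pos.2 hs)
    filter_upwards [Ico_mem_nhdsGE hs₀] with s hs hxs
    exact hxs₀ (hmono (by linarith [hs.1]) (by linarith [hs.2]) hxs)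
  have hT : T.Finite := (finite_setOf_mem_smul_isLatticePt hM (r + 1)).sdiff
  filter_upwards [hT.eventually_all.2 hfar, Ico_mem_nhdsGE one_pos] with s hsT hs
  have hrs : r ≤ r + s := le_add_of_nonneg_right hs.1
  unfold latticeCount
  congr 1
  ext x
  refine ⟨fun ⟨hxs, hx⟩ => ⟨?_, hx⟩, fun ⟨hxr, hx⟩ => ⟨hmono hr hrs hxr, hx⟩⟩
  by_contra hxr
  exact hsT x ⟨⟨hmono (hr.trans_le hrs) (by linarith [hs.2]) hxs, hx⟩, hxr⟩ hxs

end LatticePoints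

section Constituent

variable {R : Type*} [CommRing R]

-- Freezing the coefficients at `r`; its value at `r` is the quasi-polynomial at `r`.
noncomputable def constituent (Q : ℕ → R → R) (m : ℕ) (r : R) : R[X] :=
  ∑ j ∈ Finset.range (m + 1), C (Q j r) * X ^ j

variable {Q : ℕ → R → R} {m : ℕ}

theorem coeff_constituent {r : R} {j : ℕ} (hj : j ≤ m) : (constituent Q m r).coeff j = Q j r := by
  simp only [constituent, finsetSum_coeff, coeff_C_mul_X_pow]
  rw [Finset.sum_ite_eq (Finset.range (m + 1)) j, if_pos (Finset.mem_range.2 (by omega))]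

theorem degree_constituent_lt [Nontrivial R] (r : R) :
    (constituent Q m r).degree < (m + 1 : ℕ) := by
  rw [← mem_degreeLT]
  exact Submodule.sum_mem _ fun j hj => mem_degreeLT.2 <| (degree_C_mul_X_pow_le _ _).trans_lt <|
    WithBot.coe_lt_coe.2 (Finset.mem_range.1 hj)

theorem constituent_add_nat_mul {p : R} (hper : ∀ j ≤ m, Function.Periodic (Q j) p) (r : R)
    (k : ℕ) : constituent Q m (r + k * p) = constituent Q m r :=
  Finset.sum_congr rfl fun j hj =>
    by rw [(hper j (Nat.lt_succ_iff.1 (Finset.mem_range.1 hj))).nat_mul k r]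

end Constituent

theorem Polynomial.coeff_one_hasseDeriv {R : Type*} [Semiring R] (f : R[X]) (i : ℕ) :
    (hasseDeriv i f).coeff 1 = (i + 1) * f.coeff (i + 1) := by
  rw [hasseDeriv_coeff, add_comm 1 i, Nat.choose_succ_self_right]
  push_cast
  rfl

section OrderedField

variable {K : Type*} [Field K] [LinearOrder K] [IsStrictOrderedRing K] {Q : ℕ → K → K} {m : ℕ}
  {c : K → K} {p : K}

-- Both sides have degree `≤ m` and agree at the `m + 1` nodes `r + kp`, where the shift by `s`
-- does not change `c`.
theorem taylor_constituent_eq (hp : 0 < p) (hper : ∀ j ≤ m, Function.Periodic (Q j) p)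
    (hc : ∀ x, 0 ≤ x → c x = ∑ j ∈ Finset.range (m + 1), Q j x * x ^ j) {r s : K} (hr : 0 ≤ r)
    (hs : 0 ≤ s) (hconst : ∀ k ≤ m, c (r + k * p + s) = c (r + k * p)) :
    taylor s (constituent Q m (r + s)) = constituent Q m r := by
  have heval {x : K} (hx : 0 ≤ x) : (constituent Q m x).eval x = c x := by
    simp [constituent, eval_finsetSum, hc x hx]
  have hinj : Set.InjOn (fun k : ℕ => r + k * p) (Finset.range (m + 1)) := fun k _ l _ hkl => by
    simpa [hp.ne'] using hkl
  refine eq_of_degrees_lt_of_eval_index_eq (Finset.range (m + 1)) hinj ?_ ?_ fun k hk => ?_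
  · rw [degree_taylor, Finset.card_range]
    exact degree_constituent_lt _
  · rw [Finset.card_range]
    exact degree_constituent_lt _
  have hk' : k ≤ m := Nat.lt_succ_iff.1 (Finset.mem_range.1 hk)
  have hnode : 0 ≤ r + k * p := by positivity
  calc (taylor s (constituent Q m (r + s))).eval (r + k * p)
      = (constituent Q m (r + k * p + s)).eval (r + k * p + s) := by
        rw [taylor_eval, add_right_comm, constituent_add_nat_mul hper]
    _ = c (r + k * p + s) := heval (by positivity)
    _ = c (r + k * p) := hconst k hk'
    _ = (constituent Q m r).eval (r + k * p) := by
        rw [← heval hnode, constituent_add_nat_mul hper]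

theorem eval_hasseDeriv_constituent (hp : 0 < p) (hper : ∀ j ≤ m, Function.Periodic (Q j) p)
    (hc : ∀ x, 0 ≤ x → c x = ∑ j ∈ Finset.range (m + 1), Q j x * x ^ j) {r s : K} (hr : 0 ≤ r)
    (hs : 0 ≤ s) (hconst : ∀ k ≤ m, c (r + k * p + s) = c (r + k * p)) {j : ℕ} (hj : j ≤ m) :
    Q j (r + s) = (hasseDeriv j (constituent Q m r)).eval (-s) := by
  rw [← taylor_coeff, ← taylor_constituent_eq hp hper hc hr hs hconst, taylor_taylor,
    neg_add_cancel, taylor_zero, coeff_constituent hj]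

theorem Polynomial.eq_of_eventually_eval_neg_eq [TopologicalSpace K] [OrderTopology K]
    {f g : K[X]} (h : ∀ᶠ s in 𝓝[≥] 0, f.eval (-s) = g.eval (-s)) : f = g := by
  obtain ⟨u, hu, hsub⟩ := mem_nhdsGE_iff_exists_Ico_subset.1 h
  refine eq_of_infinite_eval_eq f g (((Set.Ico_infinite hu).image neg_injective.injOn).mono ?_)
  rintro _ ⟨s, hs, rfl⟩
  exact hsub hs

end OrderedField

theorem Function.Periodic.periodic_of_forall_pos {K α : Type*} [Field K] [LinearOrder K]
    [IsStrictOrderedRing K] [Archimedean K] {f : K → α} {p d : K} (hf : Function.Periodic f p)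
    (hp : 0 < p) (h : ∀ r, 0 < r → f (r + d) = f r) : Function.Periodic f d := fun r => by
  obtain ⟨k, hk⟩ := exists_nat_gt (-r / p)
  have hr : 0 < r + k * p := by rw [div_lt_iff₀ hp] at hk; linarith
  rw [← hf.nat_mul k r, ← h _ hr, ← hf.nat_mul k (r + d), add_right_comm]

theorem exists_pos_periodic_forall_le {α : Type*} {f : ℕ → ℚ → α}
    (h : ∀ j, ∃ p : ℚ, 0 < p ∧ Function.Periodic (f j) p) (m : ℕ) :
    ∃ p : ℚ, 0 < p ∧ ∀ j ≤ m, Function.Periodic (f j) p := by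
  choose p hp hper using h
  -- the product of the numerators is an integer multiple of every `p j`
  refine ⟨((∏ j ∈ Finset.range (m + 1), (p j).num : ℤ) : ℚ), ?_, fun j hj => ?_⟩
  · exact_mod_cast Finset.prod_pos fun j _ => Rat.num_pos.2 (hp j)
  obtain ⟨a, ha⟩ := Finset.dvd_prod_of_mem (fun j => (p j).num)
    (Finset.mem_range.2 (Nat.lt_succ_of_le hj))
  have : ((∏ j ∈ Finset.range (m + 1), (p j).num : ℤ) : ℚ) = ((a * (p j).den : ℤ) : ℚ) * p j := by
    rw [ha]
    push_cast
    rw [mul_assoc, Rat.den_mul_eq_num, mul_comm]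
  rw [this]
  exact (hper j).int_mul _

section Ehrhart

variable {n m : ℕ} {P : Set (Fin n → ℚ)} {Q : ℕ → ℚ → ℚ} {p : ℚ}

theorem IsRatEhrhartCoeffs.eventually_eval_hasseDeriv (hQ : IsRatEhrhartCoeffs P m Q)
    (hP : IsRatPolytope P) (h0 : (0 : Fin n → ℚ) ∈ P) (hp : 0 < p)
    (hper : ∀ j ≤ m, Function.Periodic (Q j) p) {r : ℚ} (hr : 0 < r) :
    ∀ᶠ s in 𝓝[≥] 0, ∀ j ≤ m, Q j (r + s) = (hasseDeriv j (constituent Q m r)).eval (-s) := by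
  have hnodes : ∀ᶠ s in 𝓝[≥] 0, ∀ k ∈ Finset.range (m + 1),
      latticeCount P (r + k * p + s) = latticeCount P (r + k * p) :=
    (Finset.eventually_all _).2 fun k _ => eventually_latticeCount_add_eq hP h0 (by positivity)
  filter_upwards [hnodes, self_mem_nhdsWithin] with s hs hs0 j hj
  exact eval_hasseDeriv_constituent hp hper hQ.2 hr.le hs0
    (fun k hk => congrArg Nat.cast (hs k (Finset.mem_range.2 (Nat.lt_succ_of_le hk)))) hj

theorem IsRatEhrhartCoeffs.apply_succ_add_eq_of_periodic (hQ : IsRatEhrhartCoeffs P m Q)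
    (hP : IsRatPolytope P) (h0 : (0 : Fin n → ℚ) ∈ P) (hp : 0 < p)
    (hper : ∀ j ≤ m, Function.Periodic (Q j) p) {i : ℕ} (hi : i < m) {d : ℚ}
    (hd : Function.Periodic (Q i) d) (hd0 : 0 < d) {r : ℚ} (hr : 0 < r) :
    Q (i + 1) (r + d) = Q (i + 1) r := by
  have hderiv : hasseDeriv i (constituent Q m r) = hasseDeriv i (constituent Q m (r + d)) := by
    refine eq_of_eventually_eval_neg_eq ?_
    filter_upwards [hQ.eventually_eval_hasseDeriv hP h0 hp hper hr,
      hQ.eventually_eval_hasseDeriv hP h0 hp hper (add_pos hr hd0)] with s h₁ h₂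
    rw [← h₁ i hi.le, ← h₂ i hi.le, add_right_comm, hd]
  have := congrArg (coeff · 1) hderiv
  simp only [coeff_one_hasseDeriv, coeff_constituent hi] at this
  exact (mul_left_cancel₀ (by positivity) this).symm

end Ehrhart

theorem stmt19_general {n : ℕ} (P : Set (Fin n → ℚ)) (hP : IsRatPolytope P)
    (h0 : (0 : Fin n → ℚ) ∈ P)
    (Q : ℕ → ℚ → ℚ) (hQ : IsRatEhrhartCoeffs P n Q) :
    ∀ i < n, ∀ d : ℚ, IsPeriodic (Q i) d → IsPeriodic (Q (i + 1)) d := by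
  intro i hi d hd
  obtain ⟨p, hp, hper⟩ := exists_pos_periodic_forall_le hQ.1 n
  have hpos {d : ℚ} (hd0 : 0 < d) (hd : IsPeriodic (Q i) d) : IsPeriodic (Q (i + 1)) d :=
    (hper (i + 1) hi).periodic_of_forall_pos hp fun _ hr =>
      hQ.apply_succ_add_eq_of_periodic hP h0 hp hper hi hd hd0 hr
  rcases lt_trichotomy d 0 with hneg | rfl | hd0
  · have h := Function.Periodic.neg (hpos (neg_pos.2 hneg) (Function.Periodic.neg hd))
    rwa [neg_neg] at h
  · exact fun r => by rw [add_zero]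
  · exact hpos hd0 hd

/-- for a full-dimensional rational polytope containing the origin,
every period of `Q_i(P,·)` is a period of `Q_{i+1}(P,·)`, so the minimal periods are
weakly decreasing in `i`. -/
theorem stmt19 {n : ℕ} (P : Set (Fin n → ℚ)) (hP : IsRatPolytope P)
    (hdim : polyDim P = n) (h0 : (0 : Fin n → ℚ) ∈ P)
    (Q : ℕ → ℚ → ℚ) (hQ : IsRatEhrhartCoeffs P n Q) :
    ∀ i < n, ∀ d : ℚ, IsPeriodic (Q i) d → IsPeriodic (Q (i + 1)) d :=
  stmt19_general P hP h0 Q hQ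
end
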